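/- arXiv:2404.19496 — 5 statements merged into one kernel-verified Lean document; each statement's English description precedes it below -/
import Mathlib

section
/- Under the f-contaminated multivariate Gaussian linear model, the minimizer β* of the robust least-squares criterion has asymptotic breakdown point at least 1/2 with respect to the noise: defining, for f ∈ [0,1) and a probability measure Q on ℝ^q, the contaminated criterion G_{f,Q}(β) = (1−f)∬(‖β*x + e − βx‖ − ‖β*x + e‖) dF(x) dP₀(e) + f∬(‖β*x + e − βx‖ − ‖β*x + e‖) dF(x) dQ(e) with P₀ = N_q(0,Σ), letting β*_{f,Q} denote its minimizer, and defining the bias B_{β*}(f) = sup{‖β* − β*_{f,P}‖ : P ∈ L_f} over the contamination class L_f = {(1−f)P₀ + fQ : Q a probability measure on ℝ^q}, one has f*_{β*} := inf{f : B_{β*}(f) = +∞} ≥ 0.5. -/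
open MeasureTheory Filter Matrix
open scoped BigOperators ENNReal Topology

/-- Euclidean norm of a finite-dimensional real vector. -/
noncomputable def enorm2 {m : Type*} [Fintype m] (v : m → ℝ) : ℝ :=
  Real.sqrt (∑ i, v i ^ 2)

/-- Frobenius norm of a matrix. -/
noncomputable def frob {q p : ℕ} (B : Matrix (Fin q) (Fin p) ℝ) : ℝ :=
  Real.sqrt (∑ i, ∑ j, B i j ^ 2)

/-- Density of the centered Gaussian distribution `N(0, C)` on `m → ℝ`. -/
noncomputable def gaussPdf {m : Type*} [Fintype m] [DecidableEq m] (C : Matrix m m ℝ)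
    (x : m → ℝ) : ℝ :=
  Real.exp (-(x ⬝ᵥ C⁻¹.mulVec x) / 2) / Real.sqrt ((2 * Real.pi) ^ (Fintype.card m) * C.det)

/-- The centered Gaussian measure `N(0, C)` on `m → ℝ`. -/
noncomputable def gaussMeasure {m : Type*} [Fintype m] [DecidableEq m] (C : Matrix m m ℝ) :
    Measure (m → ℝ) :=
  MeasureTheory.volume.withDensity fun x => ENNReal.ofReal (gaussPdf C x)

/-- The contaminated criterion
`G_{f,Q}(β) = (1−f)∬(‖β*x + e − βx‖ − ‖β*x + e‖) dF(x) dP₀(e)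
  + f∬(‖β*x + e − βx‖ − ‖β*x + e‖) dF(x) dQ(e)` with `P₀ = N_q(0,Σ)`. -/
noncomputable def Gcontam {p q : ℕ} (βs : Matrix (Fin q) (Fin p) ℝ)
    (S : Matrix (Fin q) (Fin q) ℝ) (F : Measure (Fin p → ℝ))
    (f : ℝ) (Q : Measure (Fin q → ℝ)) (β : Matrix (Fin q) (Fin p) ℝ) : ℝ :=
  (1 - f) * (∫ x, ∫ e,
      (enorm2 (βs.mulVec x + e - β.mulVec x) - enorm2 (βs.mulVec x + e))
        ∂(gaussMeasure S) ∂F)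
    + f * (∫ x, ∫ e,
        (enorm2 (βs.mulVec x + e - β.mulVec x) - enorm2 (βs.mulVec x + e)) ∂Q ∂F)

/-- The set of biases `{‖β* − β*_{f,Q}‖_F : Q a probability measure on ℝ^q}` attained at
the minimizers of the contaminated criteria at contamination level `f`. -/
def biasSet {p q : ℕ} (βs : Matrix (Fin q) (Fin p) ℝ)
    (S : Matrix (Fin q) (Fin q) ℝ) (F : Measure (Fin p → ℝ)) (f : ℝ) : Set ℝ :=
  {r : ℝ | ∃ Q : Measure (Fin q → ℝ), IsProbabilityMeasure Q ∧
    ∃ b : Matrix (Fin q) (Fin p) ℝ,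
      IsMinOn (Gcontam βs S F f Q) Set.univ b ∧ r = frob (βs - b)}


section Norms
variable {m : Type*} [Fintype m]

lemma enorm2_eq_norm (v : m → ℝ) : enorm2 v = ‖(WithLp.equiv 2 (m → ℝ)).symm v‖ := by
  rw [EuclideanSpace.norm_eq]
  simp only [WithLp.equiv_symm_apply, PiLp.toLp_apply, Real.norm_eq_abs, sq_abs]
  rfl

lemma enorm2_nonneg (v : m → ℝ) : 0 ≤ enorm2 v := Real.sqrt_nonneg _

lemma continuous_enorm2 : Continuous (enorm2 : (m → ℝ) → ℝ) :=
  Real.continuous_sqrt.comp (continuous_finset_sum _ fun i _ => (continuous_apply i).pow 2)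

lemma enorm2_abs_sub_le (a w : m → ℝ) : |enorm2 (a - w) - enorm2 a| ≤ enorm2 w := by
  simp only [enorm2_eq_norm]
  have h := abs_norm_sub_norm_le ((WithLp.equiv 2 (m → ℝ)).symm (a - w))
    ((WithLp.equiv 2 (m → ℝ)).symm a)
  have h2 : (WithLp.equiv 2 (m → ℝ)).symm (a - w) - (WithLp.equiv 2 (m → ℝ)).symm a
      = (WithLp.equiv 2 (m → ℝ)).symm (-w) := by
    show (WithLp.equiv 2 (m → ℝ)).symm (a - w - a) = _
    rw [sub_sub_cancel_left]
  rw [h2] at h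
  simpa using h

lemma enorm2_lower (a w : m → ℝ) :
    enorm2 w - 2 * enorm2 a ≤ enorm2 (a - w) - enorm2 a := by
  simp only [enorm2_eq_norm]
  have h : (WithLp.equiv 2 (m → ℝ)).symm w
      = (WithLp.equiv 2 (m → ℝ)).symm a - (WithLp.equiv 2 (m → ℝ)).symm (a - w) := by
    show _ = (WithLp.equiv 2 (m → ℝ)).symm (a - (a - w))
    rw [sub_sub_cancel]
  rw [h]
  have := norm_sub_le ((WithLp.equiv 2 (m → ℝ)).symm a) ((WithLp.equiv 2 (m → ℝ)).symm (a - w))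
  linarith

lemma enorm2_add_le (a b : m → ℝ) : enorm2 (a + b) ≤ enorm2 a + enorm2 b := by
  simp only [enorm2_eq_norm]
  exact norm_add_le _ _

end Norms

section Frob
variable {q p : ℕ}

lemma frob_eq_enorm2 (M : Matrix (Fin q) (Fin p) ℝ) :
    frob M = enorm2 (fun ij : Fin q × Fin p => M ij.1 ij.2) := by
  unfold frob enorm2
  rw [Fintype.sum_prod_type]

lemma frob_nonneg (M : Matrix (Fin q) (Fin p) ℝ) : 0 ≤ frob M := Real.sqrt_nonneg _

lemma frob_sub_le (A B : Matrix (Fin q) (Fin p) ℝ) : frob (A - B) ≤ frob A + frob B := by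
  simp only [frob_eq_enorm2, enorm2_eq_norm]
  have h : (WithLp.equiv 2 (Fin q × Fin p → ℝ)).symm (fun ij => (A - B) ij.1 ij.2)
      = (WithLp.equiv 2 (Fin q × Fin p → ℝ)).symm (fun ij => A ij.1 ij.2)
        - (WithLp.equiv 2 (Fin q × Fin p → ℝ)).symm (fun ij => B ij.1 ij.2) := rfl
  rw [h]
  exact norm_sub_le _ _

lemma enorm2_mulVec_le (M : Matrix (Fin q) (Fin p) ℝ) (v : Fin p → ℝ) :
    enorm2 (M *ᵥ v) ≤ frob M * enorm2 v := by
  show Real.sqrt (∑ i, (M *ᵥ v) i ^ 2) ≤ Real.sqrt (∑ i, ∑ j, M i j ^ 2) * Real.sqrt (∑ i, v i ^ 2)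
  rw [← Real.sqrt_mul (x := ∑ i, ∑ j, M i j ^ 2) (Finset.sum_nonneg fun i _ => Finset.sum_nonneg fun j _ => sq_nonneg _)]
  apply Real.sqrt_le_sqrt
  rw [Finset.sum_mul]
  apply Finset.sum_le_sum
  intro i _
  have h := Finset.sum_mul_sq_le_sq_mul_sq Finset.univ (fun j => M i j) v
  simpa [Matrix.mulVec, dotProduct] using h

lemma continuous_mulVec (M : Matrix (Fin q) (Fin p) ℝ) :
    Continuous fun v : Fin p → ℝ => M *ᵥ v := by
  have h := LinearMap.continuous_of_finiteDimensional (Matrix.toLin' M)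
  refine h.congr fun v => ?_
  rw [Matrix.toLin'_apply]

end Frob

section Euclid

lemma euclid_normsq {ι : Type*} [Fintype ι] (v : EuclideanSpace ℝ ι) :
    ‖v‖ ^ 2 = ∑ i, v i ^ 2 := by
  rw [EuclideanSpace.norm_eq, Real.sq_sqrt (Finset.sum_nonneg fun i _ => sq_nonneg _)]
  simp [sq_abs]

lemma euclid_exp_integrable {V : Type*} [NormedAddCommGroup V] [InnerProductSpace ℝ V]
    [FiniteDimensional ℝ V] [MeasurableSpace V] [BorelSpace V] {b : ℝ} (hb : 0 < b) :
    Integrable (fun v : V => Real.exp (-b * ‖v‖ ^ 2)) volume := by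
  have h := (GaussianFourier.integrable_cexp_neg_mul_sq_norm_add
    (b := (b : ℂ)) (by simpa using hb) 0 (0 : V)).norm
  refine h.congr' ?_ (Eventually.of_forall fun v => ?_)
  · exact (Real.continuous_exp.comp (by continuity)).aestronglyMeasurable
  · simp [Complex.norm_exp, ← Complex.ofReal_pow]

lemma pi_exp_integrable {ι : Type*} [Fintype ι] {b : ℝ} (hb : 0 < b) :
    Integrable (fun y : ι → ℝ => Real.exp (-b * ∑ i, y i ^ 2)) volume := by
  have hmp := EuclideanSpace.volume_preserving_symm_measurableEquiv_toLp ι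
  rw [← hmp.integrable_comp_emb (MeasurableEquiv.measurableEmbedding _)]
  have : ((fun y : ι → ℝ => Real.exp (-b * ∑ i, y i ^ 2)) ∘
      ⇑(MeasurableEquiv.toLp 2 (ι → ℝ)).symm) = fun v : EuclideanSpace ℝ ι =>
        Real.exp (-b * ‖v‖ ^ 2) := by
    funext v
    rw [Function.comp_apply, euclid_normsq]
    rfl
  rw [this]
  exact euclid_exp_integrable hb

lemma pi_exp_integral {ι : Type*} [Fintype ι] {b : ℝ} (hb : 0 < b) :
    ∫ y : ι → ℝ, Real.exp (-b * ∑ i, y i ^ 2) =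
      (Real.pi / b) ^ ((Fintype.card ι : ℝ) / 2) := by
  have hmp := (EuclideanSpace.volume_preserving_symm_measurableEquiv_toLp ι)
  rw [← hmp.integral_comp (MeasurableEquiv.measurableEmbedding _)]
  have : ∀ v : EuclideanSpace ℝ ι,
      Real.exp (-b * ∑ i, ((MeasurableEquiv.toLp 2 (ι → ℝ)).symm v) i ^ 2)
        = Real.exp (-b * ‖v‖ ^ 2) := by
    intro v
    rw [euclid_normsq]
    rfl
  simp_rw [this]
  rw [GaussianFourier.integral_rexp_neg_mul_sq_norm hb]
  congr 1
  rw [finrank_euclideanSpace]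

end Euclid

section MatrixCoV

variable {ι : Type*} [Fintype ι] [DecidableEq ι]

lemma matrix_measurableEmbedding (A : Matrix ι ι ℝ) (hA : A.det ≠ 0) :
    MeasurableEmbedding (⇑(Matrix.toLin' A)) := by
  have hinv : Invertible A := A.invertibleOfIsUnitDet (isUnit_iff_ne_zero.mpr hA)
  have h := ((Matrix.toLinearEquiv' A hinv).toContinuousLinearEquiv).toHomeomorph.measurableEmbedding
  convert h using 1
  funext x; rfl

lemma matrix_integral_comp (A : Matrix ι ι ℝ) (hA : A.det ≠ 0) (g : (ι → ℝ) → ℝ) :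
    ∫ x, g x = |A.det| * ∫ y, g (A *ᵥ y) := by
  have hemb := matrix_measurableEmbedding A hA
  have h1 : ∫ y, g (A *ᵥ y) = ∫ z, g z ∂(Measure.map (⇑(Matrix.toLin' A)) volume) := by
    rw [hemb.integral_map]
    simp_rw [Matrix.toLin'_apply]
  rw [h1, Real.map_matrix_volume_pi_eq_smul_volume_pi hA, integral_smul_measure,
    ENNReal.toReal_ofReal (abs_nonneg _), abs_inv, smul_eq_mul, ← mul_assoc,
    mul_inv_cancel₀ (by simpa using hA), one_mul]

lemma matrix_integrable_comp (A : Matrix ι ι ℝ) (hA : A.det ≠ 0) (g : (ι → ℝ) → ℝ) :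
    Integrable g volume ↔ Integrable (fun y => g (A *ᵥ y)) volume := by
  have hemb := matrix_measurableEmbedding A hA
  have h1 := hemb.integrable_map_iff (g := g) (μ := volume)
  rw [Real.map_matrix_volume_pi_eq_smul_volume_pi hA,
    integrable_smul_measure (by simpa [abs_eq_zero] using inv_ne_zero hA) ENNReal.ofReal_ne_top]
    at h1
  have h2 : (g ∘ ⇑(Matrix.toLin' A)) = fun y => g (A *ᵥ y) :=
    funext fun y => by simp [Matrix.toLin'_apply]
  rw [h1, h2]

end MatrixCoV

section GaussFacts

open scoped MatrixOrder

variable {ι : Type*} [Fintype ι] [DecidableEq ι] {S : Matrix ι ι ℝ}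

lemma continuous_mulVec' {n m : Type*} [Fintype n] (M : Matrix m n ℝ) :
    Continuous fun v : n → ℝ => M *ᵥ v := by
  refine continuous_pi fun i => ?_
  unfold Matrix.mulVec dotProduct
  exact continuous_finset_sum _ fun j _ => continuous_const.mul (continuous_apply j)

lemma enorm2_mulVec_le' {n m : Type*} [Fintype n] [Fintype m] (M : Matrix m n ℝ) (v : n → ℝ) :
    enorm2 (M *ᵥ v) ≤ Real.sqrt (∑ i, ∑ j, M i j ^ 2) * enorm2 v := by
  show Real.sqrt (∑ i, (M *ᵥ v) i ^ 2) ≤ Real.sqrt (∑ i, ∑ j, M i j ^ 2) * Real.sqrt (∑ i, v i ^ 2)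
  rw [← Real.sqrt_mul (x := ∑ i, ∑ j, M i j ^ 2) (Finset.sum_nonneg fun i _ => Finset.sum_nonneg fun j _ => sq_nonneg _)]
  apply Real.sqrt_le_sqrt
  rw [Finset.sum_mul]
  apply Finset.sum_le_sum
  intro i _
  have h := Finset.sum_mul_sq_le_sq_mul_sq Finset.univ (fun j => M i j) v
  simpa [Matrix.mulVec, dotProduct] using h

lemma gaussZ_pos (hS : S.PosDef) :
    0 < Real.sqrt ((2 * Real.pi) ^ (Fintype.card ι) * S.det) :=
  Real.sqrt_pos.mpr (mul_pos (pow_pos (by positivity) _) hS.det_pos)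

lemma gaussPdf_nonneg (hS : S.PosDef) (x : ι → ℝ) : 0 ≤ gaussPdf S x :=
  div_nonneg (Real.exp_pos _).le (Real.sqrt_nonneg _)

lemma gaussPdf_continuous : Continuous (gaussPdf S) := by
  unfold gaussPdf
  refine Continuous.div_const (Real.continuous_exp.comp ?_) _
  have h : Continuous fun x : ι → ℝ => x ⬝ᵥ S⁻¹ *ᵥ x := by
    unfold dotProduct
    refine continuous_finset_sum _ fun i _ => (continuous_apply i).mul ?_
    exact (continuous_apply i).comp (continuous_mulVec' S⁻¹)
  exact (h.neg).div_const 2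

lemma sqrt_mul_exp_le (s : ℝ) (hs : 0 ≤ s) :
    Real.sqrt s * Real.exp (-(1/2) * s) ≤ 2 * Real.exp (-(1/4) * s) := by
  have h1 : Real.sqrt s ≤ 2 * Real.exp ((1/4) * s) := by
    have h2 : (1/4) * s + 1 ≤ Real.exp ((1/4) * s) := Real.add_one_le_exp _
    nlinarith [Real.sq_sqrt hs, Real.sqrt_nonneg s, sq_nonneg (Real.sqrt s - 1)]
  calc Real.sqrt s * Real.exp (-(1/2) * s)
      ≤ (2 * Real.exp ((1/4) * s)) * Real.exp (-(1/2) * s) :=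
        mul_le_mul_of_nonneg_right h1 (Real.exp_pos _).le
    _ = 2 * Real.exp (-(1/4) * s) := by rw [mul_assoc, ← Real.exp_add]; ring_nf

lemma gauss_core (hS : S.PosDef) :
    (∫ x, gaussPdf S x = 1) ∧ Integrable (gaussPdf S) volume ∧
      Integrable (fun x => enorm2 x * gaussPdf S x) volume := by
  set Z := Real.sqrt ((2 * Real.pi) ^ (Fintype.card ι) * S.det) with hZdef
  have hZpos : 0 < Z := gaussZ_pos hS
  set A := CFC.sqrt S with hAdef
  have hAA : A * A = S := CFC.sqrt_mul_sqrt_self S (Matrix.nonneg_iff_posSemidef.mpr hS.posSemidef)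
  have hdet2 : A.det * A.det = S.det := by rw [← Matrix.det_mul, hAA]
  have hSdet : 0 < S.det := hS.det_pos
  have hdetA : A.det ≠ 0 := by
    intro h
    rw [h, mul_zero] at hdet2
    exact hSdet.ne' hdet2.symm
  have habs : |A.det| = Real.sqrt S.det := by
    rw [← Real.sqrt_sq_eq_abs]
    congr 1
    rw [sq, hdet2]
  have hsymm : Aᵀ = A := by
    have h : Aᴴ = A := (CFC.sqrt_nonneg S).posSemidef.1
    ext i j
    have h2 := congrFun (congrFun h i) j
    simp only [Matrix.conjTranspose_apply, star_trivial] at h2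
    rw [Matrix.transpose_apply, ← h2]
  have hU : IsUnit A.det := isUnit_iff_ne_zero.mpr hdetA
  have hASA : Aᵀ * (S⁻¹ * A) = 1 := by
    have h1 : A⁻¹ * A = 1 := Matrix.nonsing_inv_mul A hU
    have h2 : A * A⁻¹ = 1 := Matrix.mul_nonsing_inv A hU
    rw [hsymm, ← hAA, Matrix.mul_inv_rev]
    calc A * (A⁻¹ * A⁻¹ * A) = (A * A⁻¹) * (A⁻¹ * A) := by simp only [mul_assoc]
      _ = 1 := by rw [h1, mul_one, h2]
  have hquad : ∀ y : ι → ℝ, (A *ᵥ y) ⬝ᵥ S⁻¹ *ᵥ (A *ᵥ y) = ∑ i, y i ^ 2 := by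
    intro y
    rw [Matrix.mulVec_mulVec, Matrix.dotProduct_mulVec, Matrix.vecMul_mulVec, hASA,
      Matrix.vecMul_one]
    simp [dotProduct, sq]
  have hcomp : ∀ y, gaussPdf S (A *ᵥ y) = Real.exp (-(1/2) * ∑ i, y i ^ 2) / Z := by
    intro y
    unfold gaussPdf
    rw [hquad, ← hZdef]
    congr 1
    ring_nf
  have hint2 : Integrable (gaussPdf S) volume := by
    rw [matrix_integrable_comp A hdetA]
    refine Integrable.congr ?_ (Filter.Eventually.of_forall fun y => (hcomp y).symm)
    exact (pi_exp_integrable (by norm_num : (0:ℝ) < 1/2)).div_const Z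
  have hint : ∫ x, gaussPdf S x = 1 := by
    rw [matrix_integral_comp A hdetA]
    simp_rw [hcomp]
    rw [integral_div, pi_exp_integral (by norm_num : (0:ℝ) < 1/2)]
    have h2 : Z = (2 * Real.pi) ^ ((Fintype.card ι : ℝ) / 2) * Real.sqrt S.det := by
      rw [hZdef, Real.sqrt_mul (by positivity)]
      congr 1
      rw [Real.sqrt_eq_rpow, ← Real.rpow_natCast (2 * Real.pi), ← Real.rpow_mul (by positivity)]
      congr 1
      ring
    have hπ : Real.pi / (1/2 : ℝ) = 2 * Real.pi := by ring
    rw [habs, h2, hπ]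
    have hrpos : (0:ℝ) < (2 * Real.pi) ^ ((Fintype.card ι : ℝ) / 2) :=
      Real.rpow_pos_of_pos (by positivity) _
    field_simp
  have hmom : Integrable (fun x => enorm2 x * gaussPdf S x) volume := by
    rw [matrix_integrable_comp A hdetA]
    set cA := Real.sqrt (∑ i, ∑ j, A i j ^ 2) with hcA
    have hcA0 : 0 ≤ cA := Real.sqrt_nonneg _
    refine Integrable.mono'
      (((pi_exp_integrable (b := 1/4) (by norm_num)).const_mul (2 * cA / Z))) ?_
      (Filter.Eventually.of_forall fun y => ?_)
    · exact ((continuous_enorm2.comp (continuous_mulVec' A)).mul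
        (gaussPdf_continuous.comp (continuous_mulVec' A))).aestronglyMeasurable
    · set s := ∑ i, y i ^ 2 with hsdef
      have hs0 : 0 ≤ s := Finset.sum_nonneg fun i _ => sq_nonneg _
      have e0 : enorm2 y = Real.sqrt s := rfl
      have e1 : enorm2 (A *ᵥ y) ≤ cA * Real.sqrt s := by
        rw [← e0]; exact enorm2_mulVec_le' A y
      have e2 := sqrt_mul_exp_le s hs0
      have hnn : 0 ≤ enorm2 (A *ᵥ y) * gaussPdf S (A *ᵥ y) :=
        mul_nonneg (enorm2_nonneg _) (gaussPdf_nonneg hS _)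
      rw [Real.norm_eq_abs, abs_of_nonneg hnn, hcomp y]
      calc enorm2 (A *ᵥ y) * (Real.exp (-(1/2) * s) / Z)
          ≤ (cA * Real.sqrt s) * (Real.exp (-(1/2) * s) / Z) := by
            apply mul_le_mul_of_nonneg_right e1
            positivity
        _ = (cA / Z) * (Real.sqrt s * Real.exp (-(1/2) * s)) := by ring
        _ ≤ (cA / Z) * (2 * Real.exp (-(1/4) * s)) :=
            mul_le_mul_of_nonneg_left e2 (by positivity)
        _ = (2 * cA / Z) * Real.exp (-(1/4) * s) := by ring
  exact ⟨hint, hint2, hmom⟩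

lemma gauss_isProb (hS : S.PosDef) : IsProbabilityMeasure (gaussMeasure S) := by
  obtain ⟨hint, hint2, -⟩ := gauss_core hS
  constructor
  rw [gaussMeasure, withDensity_apply _ MeasurableSet.univ, Measure.restrict_univ,
    ← ofReal_integral_eq_lintegral_ofReal hint2
      (Filter.Eventually.of_forall fun x => gaussPdf_nonneg hS x), hint, ENNReal.ofReal_one]

lemma gauss_integrable_enorm2 (hS : S.PosDef) :
    Integrable (fun e : ι → ℝ => enorm2 e) (gaussMeasure S) := by
  obtain ⟨-, -, hmom⟩ := gauss_core hS
  have hm : Measurable fun x : ι → ℝ => ENNReal.ofReal (gaussPdf S x) :=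
    ENNReal.measurable_ofReal.comp gaussPdf_continuous.measurable
  rw [gaussMeasure, integrable_withDensity_iff hm
    (Filter.Eventually.of_forall fun x => ENNReal.ofReal_lt_top)]
  refine hmom.congr (Filter.Eventually.of_forall fun x => ?_)
  simp [ENNReal.toReal_ofReal (gaussPdf_nonneg hS x)]

end GaussFacts

section Key

lemma key_bound {p q : ℕ} (βs : Matrix (Fin q) (Fin p) ℝ) {S : Matrix (Fin q) (Fin q) ℝ}
    (hS : S.PosDef) (F : Measure (Fin p → ℝ)) [IsProbabilityMeasure F]
    (hmom : Integrable (fun x => enorm2 x) F) {f : ℝ} (hf0 : 0 ≤ f) (hf : f < 1/2)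
    (Q : Measure (Fin q → ℝ)) (hQ : IsProbabilityMeasure Q)
    (b : Matrix (Fin q) (Fin p) ℝ) (hmin : IsMinOn (Gcontam βs S F f Q) Set.univ b) :
    (1 - 2*f) * ∫ x, enorm2 (b.mulVec x) ∂F ≤
      3 * (∫ x, enorm2 (βs.mulVec x) ∂F) + 2 * ∫ e, enorm2 e ∂(gaussMeasure S) := by
  haveI := hQ
  haveI hPG : IsProbabilityMeasure (gaussMeasure S) := gauss_isProb hS
  set G := gaussMeasure S with hGdef
  have hm1 : Integrable (fun e : Fin q → ℝ => enorm2 e) G := gauss_integrable_enorm2 hS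
  set m₁ := ∫ e, enorm2 e ∂G with hm₁def
  have hm₁0 : 0 ≤ m₁ := integral_nonneg fun e => enorm2_nonneg e
  -- continuity of the integrand
  have hgcont : ∀ β : Matrix (Fin q) (Fin p) ℝ,
      Continuous fun z : (Fin p → ℝ) × (Fin q → ℝ) =>
        enorm2 (βs.mulVec z.1 + z.2 - β.mulVec z.1) - enorm2 (βs.mulVec z.1 + z.2) := by
    intro β
    have h1 : Continuous fun z : (Fin p → ℝ) × (Fin q → ℝ) => βs.mulVec z.1 + z.2 :=
      ((continuous_mulVec' βs).comp continuous_fst).add continuous_snd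
    have h2 : Continuous fun z : (Fin p → ℝ) × (Fin q → ℝ) =>
        βs.mulVec z.1 + z.2 - β.mulVec z.1 :=
      h1.sub ((continuous_mulVec' β).comp continuous_fst)
    exact (continuous_enorm2.comp h2).sub (continuous_enorm2.comp h1)
  have habs : ∀ (β : Matrix (Fin q) (Fin p) ℝ) (x : Fin p → ℝ) (e : Fin q → ℝ),
      |enorm2 (βs.mulVec x + e - β.mulVec x) - enorm2 (βs.mulVec x + e)| ≤
        enorm2 (β.mulVec x) :=
    fun β x e => enorm2_abs_sub_le _ _
  -- inner integrability over any probability measure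
  have hInner : ∀ (μ : Measure (Fin q → ℝ)), IsProbabilityMeasure μ →
      ∀ (β : Matrix (Fin q) (Fin p) ℝ) (x : Fin p → ℝ),
      Integrable (fun e => enorm2 (βs.mulVec x + e - β.mulVec x)
        - enorm2 (βs.mulVec x + e)) μ := by
    intro μ hμ β x
    haveI := hμ
    refine (integrable_const (enorm2 (β.mulVec x))).mono'
      (((hgcont β).comp (Continuous.prodMk_right x)).aestronglyMeasurable)
      (Filter.Eventually.of_forall fun e => ?_)
    rw [Real.norm_eq_abs]
    exact habs β x e
  have hInnerAbs : ∀ (μ : Measure (Fin q → ℝ)), IsProbabilityMeasure μ →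
      ∀ (β : Matrix (Fin q) (Fin p) ℝ) (x : Fin p → ℝ),
      |∫ e, (enorm2 (βs.mulVec x + e - β.mulVec x) - enorm2 (βs.mulVec x + e)) ∂μ| ≤
        enorm2 (β.mulVec x) := by
    intro μ hμ β x
    haveI := hμ
    have h := norm_integral_le_of_norm_le_const (μ := μ)
      (f := fun e => enorm2 (βs.mulVec x + e - β.mulVec x) - enorm2 (βs.mulVec x + e))
      (C := enorm2 (β.mulVec x))
      (Filter.Eventually.of_forall fun e => by rw [Real.norm_eq_abs]; exact habs β x e)
    simpa [measure_univ] using h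
  -- integrability of x ↦ enorm2 (β x)
  have hNint : ∀ β : Matrix (Fin q) (Fin p) ℝ,
      Integrable (fun x => enorm2 (β.mulVec x)) F := by
    intro β
    refine (hmom.const_mul (frob β)).mono'
      ((continuous_enorm2.comp (continuous_mulVec' β)).aestronglyMeasurable)
      (Filter.Eventually.of_forall fun x => ?_)
    rw [Real.norm_eq_abs, abs_of_nonneg (enorm2_nonneg _)]
    exact enorm2_mulVec_le' β x
  set Ms := ∫ x, enorm2 (βs.mulVec x) ∂F with hMsdef
  set Mb := ∫ x, enorm2 (b.mulVec x) ∂F with hMbdef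
  have hMs0 : 0 ≤ Ms := integral_nonneg fun x => enorm2_nonneg _
  have hMb0 : 0 ≤ Mb := integral_nonneg fun x => enorm2_nonneg _
  -- outer integrability
  have hJint : ∀ (μ : Measure (Fin q → ℝ)), IsProbabilityMeasure μ →
      ∀ β : Matrix (Fin q) (Fin p) ℝ,
      Integrable (fun x => ∫ e, (enorm2 (βs.mulVec x + e - β.mulVec x)
        - enorm2 (βs.mulVec x + e)) ∂μ) F := by
    intro μ hμ β
    haveI := hμ
    refine (hNint β).mono'
      ((hgcont β).stronglyMeasurable.integral_prod_right'.aestronglyMeasurable)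
      (Filter.Eventually.of_forall fun x => ?_)
    rw [Real.norm_eq_abs]
    exact hInnerAbs μ hμ β x
  have hJabs : ∀ (μ : Measure (Fin q → ℝ)), IsProbabilityMeasure μ →
      ∀ β : Matrix (Fin q) (Fin p) ℝ,
      |∫ x, (∫ e, (enorm2 (βs.mulVec x + e - β.mulVec x)
        - enorm2 (βs.mulVec x + e)) ∂μ) ∂F| ≤ ∫ x, enorm2 (β.mulVec x) ∂F := by
    intro μ hμ β
    have h0 := norm_integral_le_integral_norm (μ := F)
      (f := fun x => ∫ e, (enorm2 (βs.mulVec x + e - β.mulVec x)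
        - enorm2 (βs.mulVec x + e)) ∂μ)
    simp only [Real.norm_eq_abs] at h0
    refine h0.trans ?_
    exact integral_mono (hJint μ hμ β).abs (hNint β) fun x => hInnerAbs μ hμ β x
  -- lower bound on the Gaussian inner integral for β = b
  have hshift : ∀ v : Fin q → ℝ, Integrable (fun e => enorm2 (v + e)) G := by
    intro v
    refine ((integrable_const (enorm2 v)).add hm1).mono'
      ((continuous_enorm2.comp (continuous_const.add continuous_id)).aestronglyMeasurable)
      (Filter.Eventually.of_forall fun e => ?_)
    rw [Real.norm_eq_abs, abs_of_nonneg (enorm2_nonneg _)]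
    exact enorm2_add_le v e
  have hshift_le : ∀ v : Fin q → ℝ, ∫ e, enorm2 (v + e) ∂G ≤ enorm2 v + m₁ := by
    intro v
    have hint2 : Integrable (fun e : Fin q → ℝ => enorm2 v + enorm2 e) G :=
      (integrable_const (enorm2 v)).add hm1
    have h := integral_mono (hshift v) hint2 (fun e => enorm2_add_le v e)
    rwa [integral_add (integrable_const _) hm1, integral_const, probReal_univ,
      one_smul] at h
  have hlowInner : ∀ x : Fin p → ℝ,
      enorm2 (b.mulVec x) - 2 * enorm2 (βs.mulVec x) - 2 * m₁ ≤
        ∫ e, (enorm2 (βs.mulVec x + e - b.mulVec x) - enorm2 (βs.mulVec x + e)) ∂G := by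
    intro x
    have hint1 : Integrable (fun e : Fin q → ℝ =>
        enorm2 (b.mulVec x) - 2 * enorm2 (βs.mulVec x + e)) G :=
      (integrable_const _).sub ((hshift (βs.mulVec x)).const_mul 2)
    have h1 : ∫ e, (enorm2 (b.mulVec x) - 2 * enorm2 (βs.mulVec x + e)) ∂G ≤
        ∫ e, (enorm2 (βs.mulVec x + e - b.mulVec x) - enorm2 (βs.mulVec x + e)) ∂G :=
      integral_mono hint1 (hInner G hPG b x) fun e => enorm2_lower _ _
    have h2 : ∫ e, (enorm2 (b.mulVec x) - 2 * enorm2 (βs.mulVec x + e)) ∂G =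
        enorm2 (b.mulVec x) - 2 * ∫ e, enorm2 (βs.mulVec x + e) ∂G := by
      have hc : Integrable (fun e : Fin q → ℝ => 2 * enorm2 (βs.mulVec x + e)) G :=
        (hshift (βs.mulVec x)).const_mul 2
      rw [integral_sub (integrable_const _) hc, integral_const, probReal_univ,
        one_smul, integral_const_mul]
    have h3 := hshift_le (βs.mulVec x)
    rw [h2] at h1
    linarith
  have hlowOuter : Mb - 2 * Ms - 2 * m₁ ≤
      ∫ x, (∫ e, (enorm2 (βs.mulVec x + e - b.mulVec x)
        - enorm2 (βs.mulVec x + e)) ∂G) ∂F := by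
    have hA : Integrable (fun x => enorm2 (b.mulVec x) - 2 * enorm2 (βs.mulVec x)) F :=
      (hNint b).sub ((hNint βs).const_mul 2)
    have hB : Integrable (fun x => enorm2 (b.mulVec x) - 2 * enorm2 (βs.mulVec x)
        - 2 * m₁) F := hA.sub (integrable_const _)
    have hC : Integrable (fun x => 2 * enorm2 (βs.mulVec x)) F := (hNint βs).const_mul 2
    have h1 := integral_mono hB (hJint G hPG b) hlowInner
    rwa [integral_sub hA (integrable_const _), integral_sub (hNint b) hC, integral_const_mul,
      integral_const, probReal_univ, one_smul] at h1
  -- assemble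
  have hGb : (1 - f) * (Mb - 2 * Ms - 2 * m₁) + f * (-Mb) ≤ Gcontam βs S F f Q b := by
    unfold Gcontam
    rw [← hGdef]
    refine add_le_add (mul_le_mul_of_nonneg_left hlowOuter (by linarith))
      (mul_le_mul_of_nonneg_left ?_ hf0)
    have h := hJabs Q hQ b
    have h2 := neg_abs_le (∫ x, (∫ e, (enorm2 (βs.mulVec x + e - b.mulVec x)
      - enorm2 (βs.mulVec x + e)) ∂Q) ∂F)
    linarith
  have hGβs : Gcontam βs S F f Q βs ≤ (1 - f) * Ms + f * Ms := by
    unfold Gcontam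
    rw [← hGdef]
    refine add_le_add (mul_le_mul_of_nonneg_left ?_ (by linarith))
      (mul_le_mul_of_nonneg_left ?_ hf0)
    · have h := hJabs G hPG βs
      have h2 := le_abs_self (∫ x, (∫ e, (enorm2 (βs.mulVec x + e - βs.mulVec x)
        - enorm2 (βs.mulVec x + e)) ∂G) ∂F)
      linarith
    · have h := hJabs Q hQ βs
      have h2 := le_abs_self (∫ x, (∫ e, (enorm2 (βs.mulVec x + e - βs.mulVec x)
        - enorm2 (βs.mulVec x + e)) ∂Q) ∂F)
      linarith
  have hmm : Gcontam βs S F f Q b ≤ Gcontam βs S F f Q βs := hmin (Set.mem_univ βs)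
  nlinarith [mul_nonneg (mul_nonneg (by linarith : (0:ℝ) ≤ 1 - f) hf0) hMs0,
    mul_nonneg hf0 hMs0, mul_nonneg hf0 hm₁0, mul_nonneg hf0 hMb0]

end Key

/-- Theorem 1 of the paper: the minimizer `β*` of the robust least-squares
criterion has asymptotic breakdown point at least `1/2` with respect to the noise:
`f* := inf{f : B_{β*}(f) = +∞} ≥ 0.5`, where `B_{β*}(f)` is the supremum of the biases over
the contamination class `L_f`, `B_{β*}(f) = +∞` being expressed as unboundedness of the bias
set, and the infimum being taken in `ℝ≥0∞` (so that it is `+∞` when no breakdown occurs). -/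
theorem statement0 {p q : ℕ} (hp : 1 < p) (hq : 1 < q)
    (βs : Matrix (Fin q) (Fin p) ℝ)
    (S : Matrix (Fin q) (Fin q) ℝ) (hS : S.PosDef)
    (F : Measure (Fin p → ℝ)) [IsProbabilityMeasure F]
    (hmom : Integrable (fun x => enorm2 x) F)
    (hcoerc : ∀ B : ℕ → Matrix (Fin q) (Fin p) ℝ,
      Tendsto (fun n => frob (B n)) atTop atTop →
        Tendsto (fun n => ∫ x, enorm2 ((B n).mulVec x) ∂F) atTop atTop) :
    (1 / 2 : ℝ≥0∞) ≤
      ⨅ (f : ℝ) (_ : f ∈ Set.Ico (0 : ℝ) 1 ∧ ¬ BddAbove (biasSet βs S F f)),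
        ENNReal.ofReal f := by
  refine le_iInf fun f => le_iInf fun hf => ?_
  obtain ⟨⟨hf0, hf1⟩, hnb⟩ := hf
  by_contra hcon
  push_neg at hcon
  have hflt : f < 1/2 := by
    by_contra hge
    push_neg at hge
    have h : (1/2 : ℝ≥0∞) ≤ ENNReal.ofReal f := by
      calc (1/2 : ℝ≥0∞) = ENNReal.ofReal (1/2 : ℝ) := by
            rw [ENNReal.ofReal_div_of_pos (by norm_num)]
            simp
        _ ≤ ENNReal.ofReal f := ENNReal.ofReal_le_ofReal hge
    exact absurd h (not_le.mpr hcon)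
  rw [not_bddAbove_iff] at hnb
  have hex : ∀ n : ℕ, ∃ bb : Matrix (Fin q) (Fin p) ℝ,
      (∃ Q : Measure (Fin q → ℝ), IsProbabilityMeasure Q ∧
        IsMinOn (Gcontam βs S F f Q) Set.univ bb) ∧ (n : ℝ) < frob bb := by
    intro n
    obtain ⟨r, hr, hgt⟩ := hnb (frob βs + n)
    obtain ⟨Q, hQ, bb, hbmin, rfl⟩ := hr
    refine ⟨bb, ⟨Q, hQ, hbmin⟩, ?_⟩
    have h3 := frob_sub_le βs bb
    linarith
  choose B hB1 hB2 using hex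
  have htend : Tendsto (fun n => frob (B n)) atTop atTop :=
    tendsto_atTop_mono (fun n => (hB2 n).le) tendsto_natCast_atTop_atTop
  have hM := hcoerc B htend
  set D := 3 * (∫ x, enorm2 (βs.mulVec x) ∂F) + 2 * ∫ e, enorm2 e ∂(gaussMeasure S) with hD
  have hbound : ∀ n, ∫ x, enorm2 ((B n).mulVec x) ∂F ≤ D / (1 - 2*f) := by
    intro n
    obtain ⟨Q, hQ, hbmin⟩ := hB1 n
    have h := key_bound βs hS F hmom hf0 hflt Q hQ (B n) hbmin
    rw [le_div_iff₀ (by linarith : (0:ℝ) < 1 - 2*f)]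
    linarith
  obtain ⟨n, hn⟩ := (hM.eventually (eventually_gt_atTop (D / (1 - 2*f)))).exists
  exact absurd (hbound n) (not_le.mpr hn)
end

section
/- For every q×p real matrix β', it holds that 2 G_n(T_n(β')) ≤ 2 G_n(β') + 2⟨∇G_n(β'), T_n(β') − β'⟩_F + (φ(T_n(β')) − φ(β'))ᵀ L_n(β') (φ(T_n(β')) − φ(β')), where ⟨·,·⟩_F is the Frobenius inner product. -/
open Matrix
open scoped BigOperators Kronecker

/-- Row-wise vectorization of a `q × p` matrix. -/
def vecM {q p : ℕ} (B : Matrix (Fin q) (Fin p) ℝ) : Fin q × Fin p → ℝ :=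
  fun ij => B ij.1 ij.2

/-- Frobenius inner product of matrices. -/
def finner {q p : ℕ} (A B : Matrix (Fin q) (Fin p) ℝ) : ℝ :=
  ∑ i, ∑ j, A i j * B i j

/-- Empirical criterion `G_n(β) = (1/n) ∑ᵢ ‖Yᵢ − βXᵢ‖`. -/
noncomputable def Gn {p q n : ℕ} (X : Fin n → Fin p → ℝ) (Y : Fin n → Fin q → ℝ)
    (β : Matrix (Fin q) (Fin p) ℝ) : ℝ :=
  (n : ℝ)⁻¹ * ∑ i, enorm2 (Y i - β.mulVec (X i))

/-- Fixed point map `T_n(β) = (∑ᵢ YᵢXᵢᵀ/‖Yᵢ−βXᵢ‖)(∑ᵢ XᵢXᵢᵀ/‖Yᵢ−βXᵢ‖)⁻¹`. -/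
noncomputable def Tn {p q n : ℕ} (X : Fin n → Fin p → ℝ) (Y : Fin n → Fin q → ℝ)
    (β : Matrix (Fin q) (Fin p) ℝ) : Matrix (Fin q) (Fin p) ℝ :=
  (∑ i, (enorm2 (Y i - β.mulVec (X i)))⁻¹ • vecMulVec (Y i) (X i)) *
    (∑ i, (enorm2 (Y i - β.mulVec (X i)))⁻¹ • vecMulVec (X i) (X i))⁻¹

/-- Gradient of `G_n`: `∇G_n(β) = −(1/n) ∑ᵢ (Yᵢ−βXᵢ)Xᵢᵀ/‖Yᵢ−βXᵢ‖`. -/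
noncomputable def gradGn {p q n : ℕ} (X : Fin n → Fin p → ℝ) (Y : Fin n → Fin q → ℝ)
    (β : Matrix (Fin q) (Fin p) ℝ) : Matrix (Fin q) (Fin p) ℝ :=
  -((n : ℝ)⁻¹ •
    ∑ i, (enorm2 (Y i - β.mulVec (X i)))⁻¹ • vecMulVec (Y i - β.mulVec (X i)) (X i))

/-- `L_n(β) = I_q ⊗ (1/n) ∑ᵢ XᵢXᵢᵀ/‖Yᵢ−βXᵢ‖`. -/
noncomputable def Ln {p q n : ℕ} (X : Fin n → Fin p → ℝ) (Y : Fin n → Fin q → ℝ)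
    (β : Matrix (Fin q) (Fin p) ℝ) : Matrix (Fin q × Fin p) (Fin q × Fin p) ℝ :=
  (1 : Matrix (Fin q) (Fin q) ℝ) ⊗ₖ
    ((n : ℝ)⁻¹ • ∑ i, (enorm2 (Y i - β.mulVec (X i)))⁻¹ • vecMulVec (X i) (X i))

private lemma key' (a b P D : ℝ) (ha : 0 < a) (hb : 0 ≤ b) (h : b^2 = a^2 - 2*P + D) :
    2*b ≤ 2*a - 2*(a⁻¹*P) + a⁻¹*D := by
  have h1 : 2*b*a ≤ 2*a*a - 2*P + D := by nlinarith [sq_nonneg (a-b)]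
  have h3 : 2*b ≤ (2*a*a - 2*P + D)/a := by rw [le_div_iff₀ ha]; linarith
  have h4 : (2*a*a - 2*P + D)/a = 2*a - 2*(a⁻¹*P) + a⁻¹*D := by field_simp
  rw [h4] at h3; linarith

private lemma sum_rot' {a b c : Type*} [Fintype a] [Fintype b] [Fintype c]
    (f : a → b → c → ℝ) :
    ∑ k, ∑ j, ∑ i, f k j i = ∑ i, ∑ k, ∑ j, f k j i := by
  have h1 : ∀ k, ∑ j, ∑ i, f k j i = ∑ i, ∑ j, f k j i := fun k => Finset.sum_comm
  simp_rw [h1]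
  exact Finset.sum_comm

private lemma sum_rot4' {a b c d : Type*} [Fintype a] [Fintype b] [Fintype c] [Fintype d]
    (f : a → b → c → d → ℝ) :
    ∑ k, ∑ j, ∑ l, ∑ i, f k j l i = ∑ i, ∑ k, ∑ j, ∑ l, f k j l i := by
  have h : ∀ (k : a) (j : b), ∑ l, ∑ i, f k j l i = ∑ i, ∑ l, f k j l i :=
    fun _ _ => Finset.sum_comm
  simp_rw [h]
  have h2 : ∀ k : a, ∑ j, ∑ i, ∑ l, f k j l i = ∑ i, ∑ j, ∑ l, f k j l i :=
    fun _ => Finset.sum_comm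
  simp_rw [h2]
  exact Finset.sum_comm

private lemma E1' {p q n : ℕ} (X : Fin n → Fin p → ℝ) (r : Fin n → Fin q → ℝ)
    (w : Fin n → ℝ) (Δ : Matrix (Fin q) (Fin p) ℝ) :
    finner (-((n:ℝ)⁻¹ • ∑ i, w i • vecMulVec (r i) (X i))) Δ
      = -((n:ℝ)⁻¹ * ∑ i, w i * ∑ k, r i k * Δ.mulVec (X i) k) := by
  simp only [finner, Matrix.neg_apply, Matrix.smul_apply, Matrix.sum_apply,
    vecMulVec_apply, smul_eq_mul, mulVec, dotProduct, Finset.mul_sum, Finset.sum_mul,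
    neg_mul, Finset.sum_neg_distrib, neg_inj]
  rw [sum_rot']
  exact Finset.sum_congr rfl fun i _ => Finset.sum_congr rfl fun k _ =>
    Finset.sum_congr rfl fun j _ => by ring

private lemma E2' {p q n : ℕ} (X : Fin n → Fin p → ℝ)
    (w : Fin n → ℝ) (Δ : Matrix (Fin q) (Fin p) ℝ) :
    (fun ij : Fin q × Fin p => Δ ij.1 ij.2) ⬝ᵥ
      (((1 : Matrix (Fin q) (Fin q) ℝ) ⊗ₖ
        ((n:ℝ)⁻¹ • ∑ i, w i • vecMulVec (X i) (X i))).mulVec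
        (fun ij => Δ ij.1 ij.2))
      = (n:ℝ)⁻¹ * ∑ i, w i * ∑ k, (Δ.mulVec (X i) k)^2 := by
  simp only [dotProduct, mulVec, Matrix.kroneckerMap_apply, Matrix.one_apply,
    Matrix.smul_apply, Matrix.sum_apply, vecMulVec_apply, smul_eq_mul,
    Fintype.sum_prod_type, ite_mul, one_mul, zero_mul, mul_ite, mul_zero,
    Finset.sum_ite_irrel, Finset.sum_const_zero, Finset.sum_ite_eq, Finset.sum_ite_eq',
    Finset.mem_univ, if_true, Finset.mul_sum, Finset.sum_mul, pow_two]
  rw [sum_rot4']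
  exact Finset.sum_congr rfl fun i _ => Finset.sum_congr rfl fun k _ =>
    Finset.sum_congr rfl fun j _ => Finset.sum_congr rfl fun l _ => by ring

/-- Lemma 3 of the paper: descent inequality for the fixed-point map. -/
theorem statement12 {p q n : ℕ}
    (X : Fin n → Fin p → ℝ) (Y : Fin n → Fin q → ℝ)
    (hinv : ∀ β : Matrix (Fin q) (Fin p) ℝ,
      IsUnit (∑ i, (enorm2 (Y i - β.mulVec (X i)))⁻¹ • vecMulVec (X i) (X i)))
    (β' : Matrix (Fin q) (Fin p) ℝ)
    (hpos : ∀ i, 0 < enorm2 (Y i - β'.mulVec (X i)))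
    (hpos' : ∀ i, 0 < enorm2 (Y i - (Tn X Y β').mulVec (X i))) :
    2 * Gn X Y (Tn X Y β') ≤ 2 * Gn X Y β'
      + 2 * finner (gradGn X Y β') (Tn X Y β' - β')
      + (vecM (Tn X Y β') - vecM β') ⬝ᵥ
          (Ln X Y β').mulVec (vecM (Tn X Y β') - vecM β') := by
  set T := Tn X Y β' with hT
  set Δ := T - β' with hΔ
  set w : Fin n → ℝ := fun i => (enorm2 (Y i - β'.mulVec (X i)))⁻¹ with hw
  have hv : vecM T - vecM β' = fun ij : Fin q × Fin p => Δ ij.1 ij.2 := by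
    funext ij; simp [vecM, hΔ, Matrix.sub_apply]
  have hgrad : finner (gradGn X Y β') Δ
      = -((n:ℝ)⁻¹ * ∑ i, w i * ∑ k, (Y i - β'.mulVec (X i)) k * Δ.mulVec (X i) k) :=
    E1' X (fun i => Y i - β'.mulVec (X i)) w Δ
  have hquad : (vecM T - vecM β') ⬝ᵥ (Ln X Y β').mulVec (vecM T - vecM β')
      = (n:ℝ)⁻¹ * ∑ i, w i * ∑ k, (Δ.mulVec (X i) k)^2 := by
    rw [hv, Ln]
    exact E2' X w Δ
  rw [hgrad, hquad, Gn, Gn]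
  have hd : ∀ i, Δ.mulVec (X i)
      = fun k => (Y i - β'.mulVec (X i)) k - (Y i - T.mulVec (X i)) k := by
    intro i; funext k
    simp only [hΔ, Matrix.sub_mulVec, Pi.sub_apply]
    ring
  have hkey : ∀ i, 2 * enorm2 (Y i - T.mulVec (X i))
      ≤ 2 * enorm2 (Y i - β'.mulVec (X i))
        - 2 * (w i * ∑ k, (Y i - β'.mulVec (X i)) k * Δ.mulVec (X i) k)
        + w i * ∑ k, (Δ.mulVec (X i) k)^2 := by
    intro i
    have ha : 0 < enorm2 (Y i - β'.mulVec (X i)) := hpos i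
    have hb : 0 ≤ enorm2 (Y i - T.mulVec (X i)) := Real.sqrt_nonneg _
    have hsq : enorm2 (Y i - T.mulVec (X i))^2 = enorm2 (Y i - β'.mulVec (X i))^2
        - 2 * (∑ k, (Y i - β'.mulVec (X i)) k * Δ.mulVec (X i) k)
        + ∑ k, (Δ.mulVec (X i) k)^2 := by
      have h1 : enorm2 (Y i - T.mulVec (X i))^2 = ∑ k, (Y i - T.mulVec (X i)) k ^ 2 :=
        Real.sq_sqrt (Finset.sum_nonneg fun k _ => sq_nonneg _)
      have h2 : enorm2 (Y i - β'.mulVec (X i))^2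
          = ∑ k, (Y i - β'.mulVec (X i)) k ^ 2 :=
        Real.sq_sqrt (Finset.sum_nonneg fun k _ => sq_nonneg _)
      rw [h1, h2, hd i, Finset.mul_sum, ← Finset.sum_sub_distrib,
        ← Finset.sum_add_distrib]
      exact Finset.sum_congr rfl fun k _ => by ring
    exact key' _ _ _ _ ha hb hsq
  have hsum := Finset.sum_le_sum (fun i (_ : i ∈ Finset.univ) => hkey i)
  have e1 : ∑ i, 2 * enorm2 (Y i - T.mulVec (X i))
      = 2 * ∑ i, enorm2 (Y i - T.mulVec (X i)) := (Finset.mul_sum _ _ _).symm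
  have e2 : ∑ i, (2 * enorm2 (Y i - β'.mulVec (X i))
        - 2 * (w i * ∑ k, (Y i - β'.mulVec (X i)) k * Δ.mulVec (X i) k)
        + w i * ∑ k, (Δ.mulVec (X i) k)^2)
      = 2 * ∑ i, enorm2 (Y i - β'.mulVec (X i))
        - 2 * ∑ i, w i * ∑ k, (Y i - β'.mulVec (X i)) k * Δ.mulVec (X i) k
        + ∑ i, w i * ∑ k, (Δ.mulVec (X i) k)^2 := by
    rw [Finset.sum_add_distrib, Finset.sum_sub_distrib, ← Finset.mul_sum,
      ← Finset.mul_sum]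
  rw [e1, e2] at hsum
  have hn : (0:ℝ) ≤ (n:ℝ)⁻¹ := by positivity
  nlinarith [mul_le_mul_of_nonneg_left hsum hn]
end

section
/- For every q×p real matrix β', it holds that 2 G_{n,Σ}(T_{n,Σ}(β')) ≤ 2 G_{n,Σ}(β') + 2⟨∇G_{n,Σ}(β'), T_{n,Σ}(β') − β'⟩_F + (φ(T_{n,Σ}(β')) − φ(β'))ᵀ L_{n,Σ}(β') (φ(T_{n,Σ}(β')) − φ(β')), where ⟨·,·⟩_F is the Frobenius inner product. -/
open Matrix
open scoped BigOperators Kronecker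

/-- Mahalanobis norm `‖v‖_{Σ⁻¹} = √(vᵀ Σ⁻¹ v)`. -/
noncomputable def mahala {q : ℕ} (S : Matrix (Fin q) (Fin q) ℝ) (v : Fin q → ℝ) : ℝ :=
  Real.sqrt (v ⬝ᵥ S⁻¹.mulVec v)

/-- Empirical Mahalanobis criterion `G_{n,Σ}(β) = (1/n) ∑ᵢ ‖Yᵢ − βXᵢ‖_{Σ⁻¹}`. -/
noncomputable def GnS {p q n : ℕ} (S : Matrix (Fin q) (Fin q) ℝ)
    (X : Fin n → Fin p → ℝ) (Y : Fin n → Fin q → ℝ)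
    (β : Matrix (Fin q) (Fin p) ℝ) : ℝ :=
  (n : ℝ)⁻¹ * ∑ i, mahala S (Y i - β.mulVec (X i))

/-- Mahalanobis fixed point map
`T_{n,Σ}(β) = (∑ᵢ YᵢXᵢᵀ/‖Yᵢ−βXᵢ‖_{Σ⁻¹})(∑ᵢ XᵢXᵢᵀ/‖Yᵢ−βXᵢ‖_{Σ⁻¹})⁻¹`. -/
noncomputable def TnS {p q n : ℕ} (S : Matrix (Fin q) (Fin q) ℝ)
    (X : Fin n → Fin p → ℝ) (Y : Fin n → Fin q → ℝ)
    (β : Matrix (Fin q) (Fin p) ℝ) : Matrix (Fin q) (Fin p) ℝ :=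
  (∑ i, (mahala S (Y i - β.mulVec (X i)))⁻¹ • vecMulVec (Y i) (X i)) *
    (∑ i, (mahala S (Y i - β.mulVec (X i)))⁻¹ • vecMulVec (X i) (X i))⁻¹

/-- Gradient `∇G_{n,Σ}(β) = −(1/n) ∑ᵢ Σ⁻¹(Yᵢ−βXᵢ)Xᵢᵀ/‖Yᵢ−βXᵢ‖_{Σ⁻¹}`. -/
noncomputable def gradGnS {p q n : ℕ} (S : Matrix (Fin q) (Fin q) ℝ)
    (X : Fin n → Fin p → ℝ) (Y : Fin n → Fin q → ℝ)
    (β : Matrix (Fin q) (Fin p) ℝ) : Matrix (Fin q) (Fin p) ℝ :=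
  -((n : ℝ)⁻¹ • ∑ i, (mahala S (Y i - β.mulVec (X i)))⁻¹ •
      vecMulVec (S⁻¹.mulVec (Y i - β.mulVec (X i))) (X i))

/-- `L_{n,Σ}(β) = Σ⁻¹ ⊗ (1/n) ∑ᵢ XᵢXᵢᵀ/‖Yᵢ−βXᵢ‖_{Σ⁻¹}`. -/
noncomputable def LnS {p q n : ℕ} (S : Matrix (Fin q) (Fin q) ℝ)
    (X : Fin n → Fin p → ℝ) (Y : Fin n → Fin q → ℝ)
    (β : Matrix (Fin q) (Fin p) ℝ) : Matrix (Fin q × Fin p) (Fin q × Fin p) ℝ :=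
  S⁻¹ ⊗ₖ ((n : ℝ)⁻¹ • ∑ i, (mahala S (Y i - β.mulVec (X i)))⁻¹ • vecMulVec (X i) (X i))


section Aux

open Matrix
open scoped Kronecker

private lemma sum3' {a b c : Type*} [Fintype a] [Fintype b] [Fintype c] {M : Type*}
    [AddCommMonoid M] (f : a → b → c → M) :
    ∑ k, ∑ j, ∑ i, f k j i = ∑ i, ∑ k, ∑ j, f k j i :=
  (Finset.sum_congr rfl fun _ _ => Finset.sum_comm).trans Finset.sum_comm

private lemma finner_neg {q p : ℕ} (A B : Matrix (Fin q) (Fin p) ℝ) :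
    finner (-A) B = - finner A B := by
  simp [finner, neg_mul, Finset.sum_neg_distrib]

private lemma finner_smul {q p : ℕ} (r : ℝ) (A B : Matrix (Fin q) (Fin p) ℝ) :
    finner (r • A) B = r * finner A B := by
  simp [finner, smul_eq_mul, Finset.mul_sum, mul_assoc]

private lemma E2core {p q n : ℕ} (w : Fin n → ℝ) (u : Fin n → Fin q → ℝ)
    (X : Fin n → Fin p → ℝ) (Δ : Matrix (Fin q) (Fin p) ℝ) :
    finner (∑ i, w i • vecMulVec (u i) (X i)) Δ
      = ∑ i, w i * (u i ⬝ᵥ Δ.mulVec (X i)) := by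
  simp only [finner, Matrix.sum_apply, Matrix.smul_apply, vecMulVec_apply, smul_eq_mul,
    dotProduct, Matrix.mulVec, Finset.mul_sum, Finset.sum_mul]
  rw [sum3' fun k j i => w i * (u i k * X i j) * Δ k j]
  refine Finset.sum_congr rfl fun i _ => Finset.sum_congr rfl fun k _ =>
    Finset.sum_congr rfl fun j _ => by ring

private lemma E3core {p q : ℕ} (A : Matrix (Fin q) (Fin q) ℝ) (x : Fin p → ℝ)
    (Δ : Matrix (Fin q) (Fin p) ℝ) :
    vecM Δ ⬝ᵥ (A ⊗ₖ vecMulVec x x).mulVec (vecM Δ)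
      = (Δ.mulVec x) ⬝ᵥ A.mulVec (Δ.mulVec x) := by
  simp only [dotProduct, Matrix.mulVec, vecM, kroneckerMap_apply, vecMulVec_apply,
    Fintype.sum_prod_type, Finset.mul_sum, Finset.sum_mul]
  refine Finset.sum_congr rfl fun k _ => ?_
  rw [← sum3' fun l m j => Δ k j * (A k l * (x j * x m) * Δ l m)]
  refine Finset.sum_congr rfl fun l _ => Finset.sum_congr rfl fun m _ =>
    Finset.sum_congr rfl fun j _ => by ring

private lemma E3sum {p q n : ℕ} (A : Matrix (Fin q) (Fin q) ℝ) (r : ℝ) (w : Fin n → ℝ)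
    (X : Fin n → Fin p → ℝ) (Δ : Matrix (Fin q) (Fin p) ℝ) :
    vecM Δ ⬝ᵥ (A ⊗ₖ (r • ∑ i, w i • vecMulVec (X i) (X i))).mulVec (vecM Δ)
      = r * ∑ i, w i * ((Δ.mulVec (X i)) ⬝ᵥ A.mulVec (Δ.mulVec (X i))) := by
  rw [Matrix.kronecker_smul, Matrix.smul_mulVec, dotProduct_smul, smul_eq_mul]
  congr 1
  induction (Finset.univ : Finset (Fin n)) using Finset.induction with
  | empty => simp [Matrix.kroneckerMap, dotProduct, Matrix.mulVec, Matrix.of_apply]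
  | insert _ _ h ih =>
      rw [Finset.sum_insert h, Finset.sum_insert h, Matrix.kronecker_add,
        Matrix.add_mulVec, dotProduct_add, ih, Matrix.kronecker_smul,
        Matrix.smul_mulVec, dotProduct_smul, smul_eq_mul, E3core]

end Aux

/-- Lemma 5 of the paper: descent inequality for the Mahalanobis
fixed-point map. -/
theorem statement14 {p q n : ℕ}
    (S : Matrix (Fin q) (Fin q) ℝ) (hS : S.PosDef)
    (X : Fin n → Fin p → ℝ) (Y : Fin n → Fin q → ℝ)
    (hinv : ∀ β : Matrix (Fin q) (Fin p) ℝ,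
      IsUnit (∑ i, (mahala S (Y i - β.mulVec (X i)))⁻¹ • vecMulVec (X i) (X i)))
    (β' : Matrix (Fin q) (Fin p) ℝ)
    (hpos : ∀ i, 0 < mahala S (Y i - β'.mulVec (X i)))
    (hpos' : ∀ i, 0 < mahala S (Y i - (TnS S X Y β').mulVec (X i))) :
    2 * GnS S X Y (TnS S X Y β') ≤ 2 * GnS S X Y β'
      + 2 * finner (gradGnS S X Y β') (TnS S X Y β' - β')
      + (vecM (TnS S X Y β') - vecM β') ⬝ᵥ
          (LnS S X Y β').mulVec (vecM (TnS S X Y β') - vecM β') := by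
  classical
  set T := TnS S X Y β' with hTdef
  set Δ : Matrix (Fin q) (Fin p) ℝ := T - β' with hDdef
  have hsymS : (S⁻¹)ᵀ = S⁻¹ := by
    have h := hS.inv.isHermitian
    rwa [Matrix.IsHermitian, Matrix.conjTranspose_eq_transpose_of_trivial] at h
  have hnn : ∀ u : Fin q → ℝ, 0 ≤ u ⬝ᵥ S⁻¹.mulVec u := fun u => by
    simpa using hS.inv.posSemidef.dotProduct_mulVec_nonneg u
  -- residual decomposition
  have hres : ∀ i, Y i - T.mulVec (X i) = (Y i - β'.mulVec (X i)) - Δ.mulVec (X i) := by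
    intro i; funext j
    simp [hDdef, Matrix.sub_mulVec, Pi.sub_apply]
  -- quadratic expansion of the squared Mahalanobis norm
  have hsq : ∀ i, mahala S (Y i - T.mulVec (X i)) ^ 2
      = mahala S (Y i - β'.mulVec (X i)) ^ 2
        - 2 * ((S⁻¹.mulVec (Y i - β'.mulVec (X i))) ⬝ᵥ Δ.mulVec (X i))
        + (Δ.mulVec (X i) ⬝ᵥ S⁻¹.mulVec (Δ.mulVec (X i))) := by
    intro i
    have h1 : (Y i - β'.mulVec (X i)) ⬝ᵥ S⁻¹.mulVec (Δ.mulVec (X i))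
        = (S⁻¹.mulVec (Y i - β'.mulVec (X i))) ⬝ᵥ Δ.mulVec (X i) := by
      rw [Matrix.dotProduct_mulVec, ← Matrix.mulVec_transpose, hsymS]
    have h2 : Δ.mulVec (X i) ⬝ᵥ S⁻¹.mulVec (Y i - β'.mulVec (X i))
        = (S⁻¹.mulVec (Y i - β'.mulVec (X i))) ⬝ᵥ Δ.mulVec (X i) := by
      rw [dotProduct_comm]
    have hm2 : mahala S (Y i - β'.mulVec (X i)) ^ 2
        = (Y i - β'.mulVec (X i)) ⬝ᵥ S⁻¹.mulVec (Y i - β'.mulVec (X i)) :=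
      Real.sq_sqrt (hnn _)
    have hm2' : mahala S (Y i - T.mulVec (X i)) ^ 2
        = (Y i - T.mulVec (X i)) ⬝ᵥ S⁻¹.mulVec (Y i - T.mulVec (X i)) :=
      Real.sq_sqrt (hnn _)
    rw [hm2', hm2, hres i]
    generalize (Y i - β'.mulVec (X i)) = vv at h1 h2 ⊢
    generalize (Δ.mulVec (X i)) = dd at h1 h2 ⊢
    simp only [Matrix.mulVec_sub, dotProduct_sub, sub_dotProduct]
    rw [h1, h2]
    ring
  -- pointwise descent inequality
  have key : ∀ i, 2 * mahala S (Y i - T.mulVec (X i))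
      ≤ 2 * mahala S (Y i - β'.mulVec (X i))
        - 2 * ((mahala S (Y i - β'.mulVec (X i)))⁻¹
            * ((S⁻¹.mulVec (Y i - β'.mulVec (X i))) ⬝ᵥ Δ.mulVec (X i)))
        + (mahala S (Y i - β'.mulVec (X i)))⁻¹
            * (Δ.mulVec (X i) ⬝ᵥ S⁻¹.mulVec (Δ.mulVec (X i))) := by
    intro i
    set a := mahala S (Y i - T.mulVec (X i)) with ha
    set b := mahala S (Y i - β'.mulVec (X i)) with hb
    have hbpos : 0 < b := hpos i
    have h1 : b⁻¹ * b = 1 := inv_mul_cancel₀ hbpos.ne'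
    have h2 : 0 ≤ b⁻¹ * (a - b) ^ 2 :=
      mul_nonneg (inv_nonneg.mpr hbpos.le) (sq_nonneg _)
    have h3 : b⁻¹ * b * a = a := by rw [h1]; ring
    have h4 : b⁻¹ * b * b = b := by rw [h1]; ring
    have h5 : b⁻¹ * a ^ 2
        = b⁻¹ * (b ^ 2
            - 2 * ((S⁻¹.mulVec (Y i - β'.mulVec (X i))) ⬝ᵥ Δ.mulVec (X i))
            + (Δ.mulVec (X i) ⬝ᵥ S⁻¹.mulVec (Δ.mulVec (X i)))) := by
      rw [hsq i]
    nlinarith [h2, h3, h4, h5]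
  -- rewrite the three terms of the right-hand side
  have hvec : vecM T - vecM β' = vecM Δ := by
    funext ij; simp [vecM, hDdef, Matrix.sub_apply]
  have hgrad : finner (gradGnS S X Y β') Δ
      = -((n : ℝ)⁻¹ * ∑ i, (mahala S (Y i - β'.mulVec (X i)))⁻¹
          * ((S⁻¹.mulVec (Y i - β'.mulVec (X i))) ⬝ᵥ Δ.mulVec (X i))) := by
    rw [gradGnS, finner_neg, finner_smul, E2core]
  have hquad : vecM Δ ⬝ᵥ (LnS S X Y β').mulVec (vecM Δ)
      = (n : ℝ)⁻¹ * ∑ i, (mahala S (Y i - β'.mulVec (X i)))⁻¹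
          * (Δ.mulVec (X i) ⬝ᵥ S⁻¹.mulVec (Δ.mulVec (X i))) := by
    rw [LnS]; exact E3sum _ _ _ _ _
  rw [hvec, hgrad, hquad]
  simp only [GnS]
  have hmono : (n : ℝ)⁻¹ * ∑ i, 2 * mahala S (Y i - T.mulVec (X i))
      ≤ (n : ℝ)⁻¹ * ∑ i,
          (2 * mahala S (Y i - β'.mulVec (X i))
            - 2 * ((mahala S (Y i - β'.mulVec (X i)))⁻¹
                * ((S⁻¹.mulVec (Y i - β'.mulVec (X i))) ⬝ᵥ Δ.mulVec (X i)))
            + (mahala S (Y i - β'.mulVec (X i)))⁻¹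
                * (Δ.mulVec (X i) ⬝ᵥ S⁻¹.mulVec (Δ.mulVec (X i)))) := by
    refine mul_le_mul_of_nonneg_left (Finset.sum_le_sum fun i _ => key i) ?_
    positivity
  have hA : ∑ i, 2 * mahala S (Y i - T.mulVec (X i))
      = 2 * ∑ i, mahala S (Y i - T.mulVec (X i)) := by rw [Finset.mul_sum]
  have hB : ∑ i, (2 * mahala S (Y i - β'.mulVec (X i))
        - 2 * ((mahala S (Y i - β'.mulVec (X i)))⁻¹
            * ((S⁻¹.mulVec (Y i - β'.mulVec (X i))) ⬝ᵥ Δ.mulVec (X i)))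
        + (mahala S (Y i - β'.mulVec (X i)))⁻¹
            * (Δ.mulVec (X i) ⬝ᵥ S⁻¹.mulVec (Δ.mulVec (X i))))
      = 2 * (∑ i, mahala S (Y i - β'.mulVec (X i)))
        - 2 * (∑ i, (mahala S (Y i - β'.mulVec (X i)))⁻¹
            * ((S⁻¹.mulVec (Y i - β'.mulVec (X i))) ⬝ᵥ Δ.mulVec (X i)))
        + ∑ i, (mahala S (Y i - β'.mulVec (X i)))⁻¹
            * (Δ.mulVec (X i) ⬝ᵥ S⁻¹.mulVec (Δ.mulVec (X i))) := by
    rw [Finset.sum_add_distrib, Finset.sum_sub_distrib, ← Finset.mul_sum, ← Finset.mul_sum]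
  rw [hA, hB] at hmono
  ring_nf at hmono ⊢
  linarith [hmono]
end

section
/- Along the Mahalanobis fixed-point iterates β_{t+1,Σ} = T_{n,Σ}(β_{t,Σ}), for every q×p real matrix β it holds that G_{n,Σ}(β_{t+1,Σ}) ≤ G_{n,Σ}(β) + (1/2)(φ(β_{t,Σ}) − φ(β))ᵀ L_{n,Σ}(β_{t,Σ})(φ(β_{t,Σ}) − φ(β)) − (1/2)(φ(β_{t+1,Σ}) − φ(β))ᵀ L_{n,Σ}(β_{t,Σ})(φ(β_{t+1,Σ}) − φ(β)). -/
open Matrix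
open scoped BigOperators Kronecker

/-!
With weights `wᵢ = ‖Yᵢ - bXᵢ‖` taken at the current iterate `b`, the identity
`a²/w + w = 2a + (a - w)²/w` gives two bounds. Since `(a - w)²/w ≥ 0`, the surrogate
`∑ᵢ (‖Yᵢ - βXᵢ‖²/wᵢ + wᵢ)` majorizes `2 ∑ᵢ ‖Yᵢ - βXᵢ‖`; since
`(‖Yᵢ - βXᵢ‖ - wᵢ)² ≤ ‖(b - β)Xᵢ‖²`, it exceeds `2 ∑ᵢ ‖Yᵢ - βXᵢ‖` by at most the `L`-form of `b - β`.
The next iterate `T(b)` solves the normal equations of this weighted least-squares surrogate,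
so the surrogate at `β` equals its value at `T(b)` plus the `L`-form of `T(b) - β`.
Chaining the three facts at `T(b)` and at `β` gives the three-point inequality.
-/

section Mahalanobis

variable {q : ℕ} {S : Matrix (Fin q) (Fin q) ℝ}

lemma Matrix.PosDef.exists_mahala_eq_norm (hS : S.PosDef) :
    ∃ R : Matrix (Fin q) (Fin q) ℝ, ∀ v, mahala S v = ‖WithLp.toLp 2 (R *ᵥ v)‖ := by
  open scoped MatrixOrder in
  obtain ⟨R, hR⟩ := CStarAlgebra.nonneg_iff_eq_star_mul_self.mp hS.inv.posSemidef.nonneg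
  refine ⟨R, fun v => ?_⟩
  rw [mahala, hR, EuclideanSpace.norm_eq, ← mulVec_mulVec, dotProduct_mulVec, star_eq_conjTranspose,
    vecMul_conjTranspose]
  simp [dotProduct, sq]

lemma sq_mahala (hS : S.PosDef) (v : Fin q → ℝ) : mahala S v ^ 2 = v ⬝ᵥ S⁻¹ *ᵥ v :=
  Real.sq_sqrt (hS.inv.posSemidef.dotProduct_mulVec_nonneg v)

lemma abs_mahala_sub_mahala_le (hS : S.PosDef) (u v : Fin q → ℝ) :
    |mahala S u - mahala S v| ≤ mahala S (u - v) := by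
  obtain ⟨R, hR⟩ := hS.exists_mahala_eq_norm
  simpa [hR, mulVec_sub] using abs_norm_sub_norm_le (WithLp.toLp 2 (R *ᵥ u)) (WithLp.toLp 2 (R *ᵥ v))

end Mahalanobis

lemma inv_mul_sq_add_eq {w : ℝ} (hw : w ≠ 0) (a : ℝ) :
    w⁻¹ * a ^ 2 + w = 2 * a + w⁻¹ * (a - w) ^ 2 := by
  field_simp; ring

section WeightedLeastSquares

variable {ι m k : Type*} [Fintype ι] [Fintype m] [Fintype k]

lemma dotProduct_mulVec_eq_trace (u : m → ℝ) (N : Matrix m k ℝ) (x : k → ℝ) :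
    u ⬝ᵥ N *ᵥ x = trace (Nᵀ * vecMulVec u x) := by
  rw [mul_vecMulVec, trace_vecMulVec, mulVec_transpose, dotProduct_mulVec]

lemma sum_mul_dotProduct_mulVec_eq_zero {c : ι → ℝ} {X : ι → k → ℝ} {U : ι → m → ℝ}
    (h : ∑ i, c i • vecMulVec (U i) (X i) = 0) (N : Matrix m k ℝ) :
    ∑ i, c i * (U i ⬝ᵥ N *ᵥ X i) = 0 := by
  calc ∑ i, c i * (U i ⬝ᵥ N *ᵥ X i)
      = trace (Nᵀ * ∑ i, c i • vecMulVec (U i) (X i)) := by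
        simp [dotProduct_mulVec_eq_trace, Matrix.mul_sum, trace_sum]
    _ = 0 := by rw [h, Matrix.mul_zero, trace_zero]

lemma dotProduct_mulVec_add_self {M : Matrix m m ℝ} (hM : M.IsSymm) (u v : m → ℝ) :
    (u + v) ⬝ᵥ M *ᵥ (u + v) = u ⬝ᵥ M *ᵥ u + 2 * (u ⬝ᵥ M *ᵥ v) + v ⬝ᵥ M *ᵥ v := by
  have hvu : v ⬝ᵥ M *ᵥ u = u ⬝ᵥ M *ᵥ v := by
    rw [dotProduct_mulVec, ← mulVec_transpose, hM.eq, dotProduct_comm]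
  rw [mulVec_add, add_dotProduct, dotProduct_add, dotProduct_add, hvu]
  ring

/-- Pythagoras for weighted least squares: the cross term vanishes by the normal equations `h`. -/
lemma sum_mul_dotProduct_mulVec_eq_of_normal_eq {M : Matrix m m ℝ} (hM : M.IsSymm) {c : ι → ℝ}
    {X : ι → k → ℝ} {Y : ι → m → ℝ} {b : Matrix m k ℝ}
    (h : ∑ i, c i • vecMulVec (Y i - b *ᵥ X i) (X i) = 0) (β : Matrix m k ℝ) :
    ∑ i, c i * ((Y i - β *ᵥ X i) ⬝ᵥ M *ᵥ (Y i - β *ᵥ X i))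
      = ∑ i, c i * ((Y i - b *ᵥ X i) ⬝ᵥ M *ᵥ (Y i - b *ᵥ X i))
        + ∑ i, c i * (((b - β) *ᵥ X i) ⬝ᵥ M *ᵥ ((b - β) *ᵥ X i)) := by
  have hcross := sum_mul_dotProduct_mulVec_eq_zero h (M * (b - β))
  have hsplit : ∀ i, Y i - β *ᵥ X i = (Y i - b *ᵥ X i) + (b - β) *ᵥ X i := fun i => by
    rw [sub_mulVec]; abel
  simp_rw [hsplit, dotProduct_mulVec_add_self hM, ← mulVec_mulVec] at hcross ⊢
  simp only [mul_add, Finset.sum_add_distrib, mul_left_comm _ (2 : ℝ), ← Finset.mul_sum, hcross]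
  ring

end WeightedLeastSquares

section FixedPoint

variable {p q n : ℕ} {S : Matrix (Fin q) (Fin q) ℝ} (X : Fin n → Fin p → ℝ) (Y : Fin n → Fin q → ℝ)

lemma sum_smul_vecMulVec_sub_TnS_eq_zero {b : Matrix (Fin q) (Fin p) ℝ}
    (hA : IsUnit (∑ i, (mahala S (Y i - b *ᵥ X i))⁻¹ • vecMulVec (X i) (X i))) :
    ∑ i, (mahala S (Y i - b *ᵥ X i))⁻¹ • vecMulVec (Y i - TnS S X Y b *ᵥ X i) (X i) = 0 := by
  simp only [sub_vecMulVec, ← mul_vecMulVec, smul_sub, Finset.sum_sub_distrib, ← Matrix.mul_smul,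
    ← Matrix.mul_sum]
  rw [TnS, nonsing_inv_mul_cancel_right _ _ ((isUnit_iff_isUnit_det _).mp hA), sub_self]

lemma two_mul_sum_mahala_le_of_normal_eq (hS : S.PosDef) {b b' : Matrix (Fin q) (Fin p) ℝ}
    (hw : ∀ i, 0 < mahala S (Y i - b *ᵥ X i))
    (hb' : ∑ i, (mahala S (Y i - b *ᵥ X i))⁻¹ • vecMulVec (Y i - b' *ᵥ X i) (X i) = 0)
    (β : Matrix (Fin q) (Fin p) ℝ) :
    2 * ∑ i, mahala S (Y i - b' *ᵥ X i)
      ≤ 2 * ∑ i, mahala S (Y i - β *ᵥ X i)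
        + ∑ i, (mahala S (Y i - b *ᵥ X i))⁻¹ * (((b - β) *ᵥ X i) ⬝ᵥ S⁻¹ *ᵥ ((b - β) *ᵥ X i))
        - ∑ i, (mahala S (Y i - b *ᵥ X i))⁻¹ * (((b' - β) *ᵥ X i) ⬝ᵥ S⁻¹ *ᵥ ((b' - β) *ᵥ X i)) := by
  set w := fun i => mahala S (Y i - b *ᵥ X i)
  have hsymm : (S⁻¹).IsSymm := hS.inv.isHermitian
  have hmajor : ∀ i, 2 * mahala S (Y i - b' *ᵥ X i)
      ≤ (w i)⁻¹ * ((Y i - b' *ᵥ X i) ⬝ᵥ S⁻¹ *ᵥ (Y i - b' *ᵥ X i)) + w i := fun i => by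
    rw [← sq_mahala hS, inv_mul_sq_add_eq (hw i).ne']
    exact le_add_of_nonneg_right (mul_nonneg (inv_nonneg.mpr (hw i).le) (sq_nonneg _))
  have hminor : ∀ i, (w i)⁻¹ * ((Y i - β *ᵥ X i) ⬝ᵥ S⁻¹ *ᵥ (Y i - β *ᵥ X i)) + w i
      ≤ 2 * mahala S (Y i - β *ᵥ X i)
        + (w i)⁻¹ * (((b - β) *ᵥ X i) ⬝ᵥ S⁻¹ *ᵥ ((b - β) *ᵥ X i)) := fun i => by
    have hdiff : (mahala S (Y i - β *ᵥ X i) - w i) ^ 2 ≤ mahala S ((b - β) *ᵥ X i) ^ 2 := by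
      have h := abs_mahala_sub_mahala_le hS (Y i - β *ᵥ X i) (Y i - b *ᵥ X i)
      rw [show Y i - β *ᵥ X i - (Y i - b *ᵥ X i) = (b - β) *ᵥ X i by rw [sub_mulVec]; abel] at h
      exact sq_le_sq' (abs_le.mp h).1 (abs_le.mp h).2
    rw [← sq_mahala hS, ← sq_mahala hS, inv_mul_sq_add_eq (hw i).ne']
    gcongr
    exact inv_nonneg.mpr (hw i).le
  have hpyth := sum_mul_dotProduct_mulVec_eq_of_normal_eq hsymm hb' β
  have hsum_major := Finset.sum_le_sum fun i (_ : i ∈ Finset.univ) => hmajor i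
  have hsum_minor := Finset.sum_le_sum fun i (_ : i ∈ Finset.univ) => hminor i
  simp only [Finset.sum_add_distrib, ← Finset.mul_sum] at hsum_major hsum_minor
  linarith

end FixedPoint

section Vectorization

variable {p q : ℕ}

lemma vecM_sub (U V : Matrix (Fin q) (Fin p) ℝ) : vecM (U - V) = vecM U - vecM V := rfl

lemma vecM_dotProduct_kronecker_mulVec_vecM {n : ℕ} (A : Matrix (Fin q) (Fin q) ℝ)
    (c : Fin n → ℝ) (X : Fin n → Fin p → ℝ) (U : Matrix (Fin q) (Fin p) ℝ) :
    vecM U ⬝ᵥ (A ⊗ₖ ∑ i, c i • vecMulVec (X i) (X i)) *ᵥ vecM U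
      = ∑ i, c i * ((U *ᵥ X i) ⬝ᵥ A *ᵥ (U *ᵥ X i)) := by
  simp only [dotProduct, mulVec, kroneckerMap_apply, vecM, Fintype.sum_prod_type, Matrix.sum_apply,
    Matrix.smul_apply, vecMulVec_apply, smul_eq_mul, Finset.mul_sum, Finset.sum_mul]
  simp only [Finset.sum_comm (α := Fin n) (γ := Fin p), Finset.sum_comm (α := Fin n) (γ := Fin q)]
  refine Finset.sum_congr rfl fun i _ => Finset.sum_congr rfl fun j _ => ?_
  rw [Finset.sum_comm]
  refine Finset.sum_congr rfl fun j' _ => ?_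
  rw [Finset.sum_comm]
  exact Finset.sum_congr rfl fun k' _ => Finset.sum_congr rfl fun k _ => by ring

lemma vecM_dotProduct_LnS_mulVec_vecM {n : ℕ} (S : Matrix (Fin q) (Fin q) ℝ)
    (X : Fin n → Fin p → ℝ) (Y : Fin n → Fin q → ℝ) (b U : Matrix (Fin q) (Fin p) ℝ) :
    vecM U ⬝ᵥ LnS S X Y b *ᵥ vecM U
      = (n : ℝ)⁻¹ * ∑ i, (mahala S (Y i - b *ᵥ X i))⁻¹ * ((U *ᵥ X i) ⬝ᵥ S⁻¹ *ᵥ (U *ᵥ X i)) := by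
  rw [LnS, kronecker_smul, smul_mulVec, dotProduct_smul, vecM_dotProduct_kronecker_mulVec_vecM,
    smul_eq_mul]

end Vectorization

/-- Lemma 6 of the paper: along the Mahalanobis fixed-point iterates
`β_{t+1,Σ} = T_{n,Σ}(β_{t,Σ})`, for every matrix `β` a three-point descent inequality holds. -/
theorem statement15 {p q n : ℕ}
    (S : Matrix (Fin q) (Fin q) ℝ) (hS : S.PosDef)
    (X : Fin n → Fin p → ℝ) (Y : Fin n → Fin q → ℝ)
    (hinv : ∀ β : Matrix (Fin q) (Fin p) ℝ,
      IsUnit (∑ i, (mahala S (Y i - β.mulVec (X i)))⁻¹ • vecMulVec (X i) (X i)))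
    (B : ℕ → Matrix (Fin q) (Fin p) ℝ)
    (hrec : ∀ t, B (t + 1) = TnS S X Y (B t))
    (hpos : ∀ t i, 0 < mahala S (Y i - (B t).mulVec (X i))) :
    ∀ (t : ℕ) (β : Matrix (Fin q) (Fin p) ℝ),
      GnS S X Y (B (t + 1)) ≤ GnS S X Y β
        + (1 / 2) * ((vecM (B t) - vecM β) ⬝ᵥ
            (LnS S X Y (B t)).mulVec (vecM (B t) - vecM β))
        - (1 / 2) * ((vecM (B (t + 1)) - vecM β) ⬝ᵥ
            (LnS S X Y (B t)).mulVec (vecM (B (t + 1)) - vecM β)) := by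
  intro t β
  have hnormal := sum_smul_vecMulVec_sub_TnS_eq_zero X Y (hinv (B t))
  rw [← hrec t] at hnormal
  have hdescent := two_mul_sum_mahala_le_of_normal_eq X Y hS (hpos t) hnormal β
  rw [GnS, GnS, ← vecM_sub, ← vecM_sub, vecM_dotProduct_LnS_mulVec_vecM,
    vecM_dotProduct_LnS_mulVec_vecM]
  have hn : (0 : ℝ) ≤ (n : ℝ)⁻¹ := by positivity
  linarith [mul_le_mul_of_nonneg_left hdescent hn]
end

section
/- For every nonzero q×p real matrix β', it holds that 2 G_{n,Σ,λ}(T_{n,φ,Σ,λ}(β')) ≤ 2 G_{n,Σ,λ}(β') + 2⟨∇G̃_{n,Σ,λ}(φ(β')), T_{n,φ,Σ,λ}(β') − φ(β')⟩ + (T_{n,φ,Σ,λ}(β') − φ(β'))ᵀ L_{n,Σ,λ}(β') (T_{n,φ,Σ,λ}(β') − φ(β')), where L_{n,Σ,λ}(β') = Σ^{−1} ⊗ (1/n)Σ_{i=1}^{n} X_iX_iᵀ/‖Y_i − β'X_i‖_{Σ^{−1}} + (λ/‖β'‖_F) I_{pq}. -/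
open Matrix
open scoped BigOperators Kronecker Classical

/-- Inverse of the row-wise vectorization. -/
def unvec {q p : ℕ} (v : Fin q × Fin p → ℝ) : Matrix (Fin q) (Fin p) ℝ :=
  Matrix.of fun i j => v (i, j)

/-- Empirical regularized Mahalanobis criterion
`G_{n,Σ,λ}(β) = (1/n) ∑ᵢ ‖Yᵢ − βXᵢ‖_{Σ⁻¹} + λ‖β‖_F`. -/
noncomputable def GnSL {p q n : ℕ} (S : Matrix (Fin q) (Fin q) ℝ) (lam : ℝ)
    (X : Fin n → Fin p → ℝ) (Y : Fin n → Fin q → ℝ)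
    (β : Matrix (Fin q) (Fin p) ℝ) : ℝ :=
  (n : ℝ)⁻¹ * ∑ i, mahala S (Y i - β.mulVec (X i)) + lam * frob β

/-- Vectorized gradient `∇G̃_{n,Σ,λ}` of the empirical regularized criterion:
`−(1/n)∑ᵢ (Σ⁻¹(Yᵢ−βXᵢ)/‖Yᵢ−βXᵢ‖_{Σ⁻¹}) ⊙ Xᵢ + λ φ(β)/‖β‖_F ⋅ 1_{β ≠ 0}`. -/
noncomputable def gradGnSL {p q n : ℕ} (S : Matrix (Fin q) (Fin q) ℝ) (lam : ℝ)
    (X : Fin n → Fin p → ℝ) (Y : Fin n → Fin q → ℝ)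
    (β : Matrix (Fin q) (Fin p) ℝ) : Fin q × Fin p → ℝ :=
  fun a =>
    -((n : ℝ)⁻¹ * ∑ i,
        (S⁻¹.mulVec (Y i - β.mulVec (X i))) a.1 / mahala S (Y i - β.mulVec (X i)) * X i a.2)
      + (if β = 0 then 0 else lam * β a.1 a.2 / frob β)

/-- `L_{n,Σ,λ}(β') = Σ⁻¹ ⊗ (1/n)∑ᵢ XᵢXᵢᵀ/‖Yᵢ−β'Xᵢ‖_{Σ⁻¹} + (λ/‖β'‖_F) I_{pq}`. -/
noncomputable def LnSL {p q n : ℕ} (S : Matrix (Fin q) (Fin q) ℝ) (lam : ℝ)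
    (X : Fin n → Fin p → ℝ) (Y : Fin n → Fin q → ℝ)
    (β : Matrix (Fin q) (Fin p) ℝ) : Matrix (Fin q × Fin p) (Fin q × Fin p) ℝ :=
  S⁻¹ ⊗ₖ ((n : ℝ)⁻¹ • ∑ i, (mahala S (Y i - β.mulVec (X i)))⁻¹ • vecMulVec (X i) (X i))
    + (lam / frob β) • (1 : Matrix (Fin q × Fin p) (Fin q × Fin p) ℝ)

/-- Iteration map `T_{n,φ,Σ,λ}(β) = φ(β) + (Σ⁻¹ ⊗ (1/n)∑ᵢ XᵢXᵢᵀ/‖Yᵢ−βXᵢ‖_{Σ⁻¹}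
+ (λ 1_{β≠0}/‖β‖_F) I_{pq})⁻¹ ∇G̃_{n,Σ,λ}(φ(β))`. -/
noncomputable def TphiSL {p q n : ℕ} (S : Matrix (Fin q) (Fin q) ℝ) (lam : ℝ)
    (X : Fin n → Fin p → ℝ) (Y : Fin n → Fin q → ℝ)
    (β : Matrix (Fin q) (Fin p) ℝ) : Fin q × Fin p → ℝ :=
  vecM β +
    (S⁻¹ ⊗ₖ ((n : ℝ)⁻¹ • ∑ i, (mahala S (Y i - β.mulVec (X i)))⁻¹ • vecMulVec (X i) (X i))
        + ((if β = 0 then (0 : ℝ) else lam) / frob β) •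
            (1 : Matrix (Fin q × Fin p) (Fin q × Fin p) ℝ))⁻¹.mulVec
      (gradGnSL S lam X Y β)

/- ### Auxiliary lemmas -/

lemma two_sqrt_le (a b : ℝ) (hb : 0 < b) (ha : 0 ≤ a) :
    2 * Real.sqrt a ≤ 2 * b + (a - b ^ 2) / b := by
  have h : (a - b ^ 2) / b * b = a - b ^ 2 := by field_simp
  nlinarith [Real.sq_sqrt ha, sq_nonneg (Real.sqrt a - b), Real.sqrt_nonneg a]

lemma quad_sub {q : ℕ} (A : Matrix (Fin q) (Fin q) ℝ) (hA : Aᵀ = A) (r w : Fin q → ℝ) :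
    (r - w) ⬝ᵥ A.mulVec (r - w)
      = r ⬝ᵥ A.mulVec r - 2 * (A.mulVec r ⬝ᵥ w) + w ⬝ᵥ A.mulVec w := by
  have hsym : ∀ x y : Fin q → ℝ, x ⬝ᵥ A.mulVec y = A.mulVec x ⬝ᵥ y := by
    intro x y
    rw [dotProduct_mulVec, ← mulVec_transpose, hA]
  have h1 : r ⬝ᵥ A.mulVec w = A.mulVec r ⬝ᵥ w := hsym r w
  have h2 : A.mulVec r ⬝ᵥ w = w ⬝ᵥ A.mulVec r := dotProduct_comm _ _
  rw [mulVec_sub, dotProduct_sub, sub_dotProduct, sub_dotProduct]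
  linarith

lemma sum4 {a b c e : Type*} [Fintype a] [Fintype b] [Fintype c] [Fintype e]
    (f : a → b → c → e → ℝ) :
    ∑ i : a, ∑ j : b, ∑ t : c, ∑ k : e, f i j t k
      = ∑ t : c, ∑ i : a, ∑ j : b, ∑ k : e, f i j t k :=
  (Finset.sum_congr rfl fun _ _ => Finset.sum_comm).trans Finset.sum_comm

lemma kron_quad {q p : ℕ} (A : Matrix (Fin q) (Fin q) ℝ) (x : Fin p → ℝ)
    (d : Fin q × Fin p → ℝ) :
    d ⬝ᵥ (A ⊗ₖ vecMulVec x x).mulVec d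
      = ((unvec d).mulVec x) ⬝ᵥ A.mulVec ((unvec d).mulVec x) := by
  simp only [dotProduct, mulVec, kroneckerMap_apply, vecMulVec_apply, unvec, Matrix.of_apply,
    Fintype.sum_prod_type, Finset.mul_sum, Finset.sum_mul]
  refine Finset.sum_congr rfl fun i _ => ?_
  rw [Finset.sum_comm]
  refine Finset.sum_congr rfl fun k _ => ?_
  rw [Finset.sum_comm]
  refine Finset.sum_congr rfl fun l _ => ?_
  refine Finset.sum_congr rfl fun j _ => ?_
  ring

lemma sum_mulVec' {m n : Type*} [Fintype m] [Fintype n] {ι : Type*} (s : Finset ι)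
    (M : ι → Matrix m n ℝ)
    (v : n → ℝ) : (∑ t ∈ s, M t).mulVec v = ∑ t ∈ s, (M t).mulVec v := by
  ext i
  simp only [mulVec, dotProduct, Finset.sum_apply, Matrix.sum_apply, Finset.sum_mul]
  exact Finset.sum_comm

lemma kron_sum {q p : ℕ} {ι : Type*} (s : Finset ι) (A : Matrix (Fin q) (Fin q) ℝ)
    (M : ι → Matrix (Fin p) (Fin p) ℝ) :
    A ⊗ₖ (∑ t ∈ s, M t) = ∑ t ∈ s, A ⊗ₖ M t := by
  ext a b
  simp [kroneckerMap_apply, Matrix.sum_apply, Finset.mul_sum]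

lemma sq_sum_nonneg {q p : ℕ} (B : Matrix (Fin q) (Fin p) ℝ) :
    0 ≤ ∑ i, ∑ j, B i j ^ 2 :=
  Finset.sum_nonneg fun _ _ => Finset.sum_nonneg fun _ _ => sq_nonneg _

lemma frob_pos {q p : ℕ} (B : Matrix (Fin q) (Fin p) ℝ) (hB : B ≠ 0) : 0 < frob B := by
  apply Real.sqrt_pos.mpr
  rcases (sq_sum_nonneg B).lt_or_eq with h | h
  · exact h
  · exfalso
    apply hB
    ext i j
    have h1 : ∀ i ∈ Finset.univ, (0:ℝ) ≤ ∑ j, B i j ^ 2 :=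
      fun _ _ => Finset.sum_nonneg fun _ _ => sq_nonneg _
    have h2 := (Finset.sum_eq_zero_iff_of_nonneg h1).mp h.symm i (Finset.mem_univ i)
    have h3 := (Finset.sum_eq_zero_iff_of_nonneg
      (fun j _ => sq_nonneg (B i j))).mp h2 j (Finset.mem_univ j)
    simpa using pow_eq_zero_iff (n := 2) (by norm_num) |>.mp h3

/-- Dot product of the gradient with an arbitrary direction. -/
lemma grad_dot {p q n : ℕ} (S : Matrix (Fin q) (Fin q) ℝ) (lam : ℝ)
    (X : Fin n → Fin p → ℝ) (Y : Fin n → Fin q → ℝ)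
    (β' : Matrix (Fin q) (Fin p) ℝ) (hβ' : β' ≠ 0) (d : Fin q × Fin p → ℝ) :
    gradGnSL S lam X Y β' ⬝ᵥ d
      = -((n : ℝ)⁻¹ * ∑ t, (S⁻¹.mulVec (Y t - β'.mulVec (X t)) ⬝ᵥ (unvec d).mulVec (X t))
            / mahala S (Y t - β'.mulVec (X t)))
        + lam * (∑ i, ∑ j, β' i j * unvec d i j) / frob β' := by
  simp only [gradGnSL, dotProduct, if_neg hβ', unvec, Matrix.of_apply, mulVec,
    Fintype.sum_prod_type, add_mul, neg_mul, Finset.sum_add_distrib]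
  congr 1
  · simp only [div_eq_mul_inv, Finset.sum_mul, Finset.mul_sum, Finset.sum_neg_distrib, neg_inj]
    rw [sum4]
    refine Finset.sum_congr rfl fun t _ => ?_
    refine Finset.sum_congr rfl fun i _ => ?_
    refine Finset.sum_congr rfl fun j _ => ?_
    refine Finset.sum_congr rfl fun k _ => ?_
    ring
  · simp only [div_eq_mul_inv, Finset.sum_mul, Finset.mul_sum]
    refine Finset.sum_congr rfl fun i _ => Finset.sum_congr rfl fun j _ => ?_
    ring

/-- Quadratic form of `L` on an arbitrary direction. -/
lemma L_quad {p q n : ℕ} (S : Matrix (Fin q) (Fin q) ℝ) (lam : ℝ)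
    (X : Fin n → Fin p → ℝ) (Y : Fin n → Fin q → ℝ)
    (β' : Matrix (Fin q) (Fin p) ℝ) (d : Fin q × Fin p → ℝ) :
    d ⬝ᵥ (LnSL S lam X Y β').mulVec d
      = (n : ℝ)⁻¹ * ∑ t, ((unvec d).mulVec (X t) ⬝ᵥ S⁻¹.mulVec ((unvec d).mulVec (X t)))
            / mahala S (Y t - β'.mulVec (X t))
        + lam / frob β' * ∑ i, ∑ j, unvec d i j ^ 2 := by
  have h1 : ((n : ℝ)⁻¹ • ∑ t, (mahala S (Y t - β'.mulVec (X t)))⁻¹ • vecMulVec (X t) (X t))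
      = ∑ t, ((n : ℝ)⁻¹ * (mahala S (Y t - β'.mulVec (X t)))⁻¹) • vecMulVec (X t) (X t) := by
    rw [Finset.smul_sum]
    simp [smul_smul]
  have h2 : S⁻¹ ⊗ₖ ∑ t, ((n : ℝ)⁻¹ * (mahala S (Y t - β'.mulVec (X t)))⁻¹) •
        vecMulVec (X t) (X t)
      = ∑ t, ((n : ℝ)⁻¹ * (mahala S (Y t - β'.mulVec (X t)))⁻¹) •
          (S⁻¹ ⊗ₖ vecMulVec (X t) (X t)) := by
    rw [kron_sum]
    exact Finset.sum_congr rfl fun t _ => kronecker_smul _ _ _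
  rw [LnSL, h1, h2, add_mulVec, dotProduct_add]
  congr 1
  · rw [sum_mulVec']
    rw [show d ⬝ᵥ ∑ t, (((n : ℝ)⁻¹ * (mahala S (Y t - β'.mulVec (X t)))⁻¹) •
          (S⁻¹ ⊗ₖ vecMulVec (X t) (X t))).mulVec d
        = ∑ t, d ⬝ᵥ (((n : ℝ)⁻¹ * (mahala S (Y t - β'.mulVec (X t)))⁻¹) •
          (S⁻¹ ⊗ₖ vecMulVec (X t) (X t))).mulVec d from by
      simp [dotProduct, Finset.sum_apply, Finset.mul_sum]; exact Finset.sum_comm]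
    rw [Finset.mul_sum]
    refine Finset.sum_congr rfl fun t _ => ?_
    rw [smul_mulVec, dotProduct_smul, kron_quad]
    simp only [smul_eq_mul]
    ring
  · rw [smul_mulVec, one_mulVec, dotProduct_smul]
    simp only [smul_eq_mul, dotProduct, Fintype.sum_prod_type, unvec, Matrix.of_apply]
    congr 1
    exact Finset.sum_congr rfl fun i _ => Finset.sum_congr rfl fun j _ => (sq _).symm

/-- Lemma 7 of the paper: descent inequality for the regularized
conditioned-gradient map. -/
theorem statement16 {p q n : ℕ}
    (S : Matrix (Fin q) (Fin q) ℝ) (hS : S.PosDef) (lam : ℝ) (hlam : 0 < lam)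
    (X : Fin n → Fin p → ℝ) (Y : Fin n → Fin q → ℝ)
    (β' : Matrix (Fin q) (Fin p) ℝ) (hβ' : β' ≠ 0)
    (hpos : ∀ i, 0 < mahala S (Y i - β'.mulVec (X i)))
    (hpos' : ∀ i, 0 < mahala S (Y i - (unvec (TphiSL S lam X Y β')).mulVec (X i))) :
    2 * GnSL S lam X Y (unvec (TphiSL S lam X Y β')) ≤ 2 * GnSL S lam X Y β'
      + 2 * (gradGnSL S lam X Y β' ⬝ᵥ (TphiSL S lam X Y β' - vecM β'))
      + (TphiSL S lam X Y β' - vecM β') ⬝ᵥ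
          (LnSL S lam X Y β').mulVec (TphiSL S lam X Y β' - vecM β') := by
  classical
  have hF : 0 < frob β' := frob_pos β' hβ'
  have hSsym : (S⁻¹)ᵀ = S⁻¹ := by
    have h2 : (S⁻¹).IsHermitian := hS.isHermitian.inv
    ext i j
    have h3 := congrFun (congrFun h2 i) j
    simpa using h3
  set d := TphiSL S lam X Y β' - vecM β' with hd
  have hB : unvec (TphiSL S lam X Y β') = β' + unvec d := by
    ext i j
    simp [unvec, hd, vecM, Matrix.add_apply]
  -- per-observation descent inequality
  have key : ∀ t, 2 * mahala S (Y t - (unvec (TphiSL S lam X Y β')).mulVec (X t))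
      ≤ 2 * mahala S (Y t - β'.mulVec (X t))
        - 2 * ((S⁻¹.mulVec (Y t - β'.mulVec (X t)) ⬝ᵥ (unvec d).mulVec (X t))
            / mahala S (Y t - β'.mulVec (X t)))
        + ((unvec d).mulVec (X t) ⬝ᵥ S⁻¹.mulVec ((unvec d).mulVec (X t)))
            / mahala S (Y t - β'.mulVec (X t)) := by
    intro t
    have harg : Y t - (unvec (TphiSL S lam X Y β')).mulVec (X t)
        = (Y t - β'.mulVec (X t)) - (unvec d).mulVec (X t) := by
      rw [hB, add_mulVec, sub_add_eq_sub_sub]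
    set r := Y t - β'.mulVec (X t)
    set w := (unvec d).mulVec (X t)
    set m := mahala S r with hm
    have hmpos : 0 < m := hpos t
    have hQr : m ^ 2 = r ⬝ᵥ S⁻¹.mulVec r := Real.sq_sqrt (Real.sqrt_pos.mp hmpos).le
    have ha : 0 < (r - w) ⬝ᵥ S⁻¹.mulVec (r - w) := by
      have h := hpos' t
      rw [harg] at h
      exact Real.sqrt_pos.mp h
    have hstep : 2 * Real.sqrt ((r - w) ⬝ᵥ S⁻¹.mulVec (r - w))
        ≤ 2 * m + ((r - w) ⬝ᵥ S⁻¹.mulVec (r - w) - m ^ 2) / m :=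
      two_sqrt_le _ _ hmpos ha.le
    have hdiv : ((r - w) ⬝ᵥ S⁻¹.mulVec (r - w) - m ^ 2) / m
        = -(2 * ((S⁻¹.mulVec r ⬝ᵥ w) / m)) + (w ⬝ᵥ S⁻¹.mulVec w) / m := by
      rw [quad_sub _ hSsym, hQr]
      ring
    rw [harg]
    show 2 * Real.sqrt ((r - w) ⬝ᵥ S⁻¹.mulVec (r - w)) ≤ _
    rw [hdiv] at hstep
    linarith
  -- penalty descent inequality
  have pen : 2 * frob (β' + unvec d) ≤ 2 * frob β'
      + 2 * ((∑ i, ∑ j, β' i j * unvec d i j) / frob β')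
      + (∑ i, ∑ j, unvec d i j ^ 2) / frob β' := by
    have hsum : (∑ i, ∑ j, (β' + unvec d) i j ^ 2)
        = (∑ i, ∑ j, β' i j ^ 2) + 2 * (∑ i, ∑ j, β' i j * unvec d i j)
          + ∑ i, ∑ j, unvec d i j ^ 2 := by
      rw [Finset.mul_sum, ← Finset.sum_add_distrib, ← Finset.sum_add_distrib]
      refine Finset.sum_congr rfl fun i _ => ?_
      rw [Finset.mul_sum, ← Finset.sum_add_distrib, ← Finset.sum_add_distrib]
      refine Finset.sum_congr rfl fun j _ => ?_
      simp only [Matrix.add_apply]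
      ring
    have hFsq : frob β' ^ 2 = ∑ i, ∑ j, β' i j ^ 2 := Real.sq_sqrt (sq_sum_nonneg β')
    have hstep : 2 * Real.sqrt (∑ i, ∑ j, (β' + unvec d) i j ^ 2)
        ≤ 2 * frob β' + ((∑ i, ∑ j, (β' + unvec d) i j ^ 2) - frob β' ^ 2) / frob β' :=
      two_sqrt_le _ _ hF (sq_sum_nonneg _)
    have hdiv : ((∑ i, ∑ j, (β' + unvec d) i j ^ 2) - frob β' ^ 2) / frob β'
        = 2 * ((∑ i, ∑ j, β' i j * unvec d i j) / frob β')
          + (∑ i, ∑ j, unvec d i j ^ 2) / frob β' := by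
      rw [hsum, hFsq]
      ring
    rw [hdiv] at hstep
    have hfr2 : frob (β' + unvec d) = Real.sqrt (∑ i, ∑ j, (β' + unvec d) i j ^ 2) := rfl
    rw [hfr2]
    linarith
  -- identities for the linear and quadratic terms
  rw [grad_dot S lam X Y β' hβ' d, L_quad S lam X Y β' d]
  have hfr : frob (unvec (TphiSL S lam X Y β')) = frob (β' + unvec d) := by rw [hB]
  simp only [GnSL, hfr]
  set A := ∑ t, mahala S (Y t - (unvec (TphiSL S lam X Y β')).mulVec (X t)) with hA
  set B := ∑ t, mahala S (Y t - β'.mulVec (X t)) with hBs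
  set C := ∑ t, (S⁻¹.mulVec (Y t - β'.mulVec (X t)) ⬝ᵥ (unvec d).mulVec (X t))
      / mahala S (Y t - β'.mulVec (X t)) with hC
  set E := ∑ t, ((unvec d).mulVec (X t) ⬝ᵥ S⁻¹.mulVec ((unvec d).mulVec (X t)))
      / mahala S (Y t - β'.mulVec (X t)) with hE
  set P := ∑ i, ∑ j, β' i j * unvec d i j with hP
  set D := ∑ i, ∑ j, unvec d i j ^ 2 with hD
  set F := frob β' with hFs
  set FB := frob (β' + unvec d) with hFB
  -- sum up the per-observation inequalities
  have hsumkey : 2 * A ≤ 2 * B - 2 * C + E := by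
    have h := Finset.sum_le_sum fun t (_ : t ∈ Finset.univ) => key t
    simpa [hA, hBs, hC, hE, Finset.mul_sum, Finset.sum_add_distrib,
      Finset.sum_sub_distrib] using h
  have hn : (0:ℝ) ≤ (n : ℝ)⁻¹ := by positivity
  have k : 2 * ((n : ℝ)⁻¹ * A) ≤ 2 * ((n : ℝ)⁻¹ * B) - 2 * ((n : ℝ)⁻¹ * C) + (n : ℝ)⁻¹ * E :=
    calc 2 * ((n : ℝ)⁻¹ * A) = (n : ℝ)⁻¹ * (2 * A) := by ring
      _ ≤ (n : ℝ)⁻¹ * (2 * B - 2 * C + E) := mul_le_mul_of_nonneg_left hsumkey hn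
      _ = 2 * ((n : ℝ)⁻¹ * B) - 2 * ((n : ℝ)⁻¹ * C) + (n : ℝ)⁻¹ * E := by ring
  have pn : 2 * (lam * FB) ≤ 2 * (lam * F) + 2 * (lam * P / F) + lam / F * D :=
    calc 2 * (lam * FB) = lam * (2 * FB) := by ring
      _ ≤ lam * (2 * F + 2 * (P / F) + D / F) := mul_le_mul_of_nonneg_left pen hlam.le
      _ = 2 * (lam * F) + 2 * (lam * P / F) + lam / F * D := by ring
  linarith [k, pn]
end
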